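/- arXiv:2007.14377 — 10 statements merged into one kernel-verified Lean document; each statement's English description precedes it below -/
import Mathlib

section
/- Let H be a graph and G an isometric subgraph of H such that every peripheral vertex of H belongs to V(G). Then for any two vertices x, y of H and any shortest (x,y)-path P in H, there exist vertices x*, y* in V(G) that are peripheral vertices of H, and a shortest (x*,y*)-path in H that contains P as a subpath. -/
open SimpleGraph

/-- The metric interval `I_H(x,y)`: vertices on shortest `(x,y)`-paths. -/
def interval {V : Type*} (H : SimpleGraph V) (x y : V) : Set V :=
  {v | H.dist x v + H.dist v y = H.dist x y}

/-- A vertex `x` of `H` is peripheral if there is a vertex `y` such that for every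
vertex `z ≠ x`, the interval `I_H(y,x)` is not a proper subset of `I_H(y,z)`. -/
def Peripheral {V : Type*} (H : SimpleGraph V) (x : V) : Prop :=
  ∃ y : V, ∀ z : V, z ≠ x → ¬ interval H y x ⊂ interval H y z

lemma exists_peripheral_ext {V : Type*} [Fintype V] (H : SimpleGraph V) (w x : V) :
    ∃ a : V, Peripheral H a ∧ interval H w x ⊆ interval H w a := by
  obtain ⟨a, has, hmax⟩ := Set.Finite.exists_maximalFor (fun z => interval H w z)
    {z | interval H w x ⊆ interval H w z} (Set.toFinite _) ⟨x, fun v hv => hv⟩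
  refine ⟨a, ⟨w, fun z _ hss => ?_⟩, has⟩
  exact hss.2 (hmax (has.trans hss.subset) hss.subset)

/-- For any shortest `(x,y)`-path `P` in `H` there are peripheral (hence real) vertices
`x*, y*` of `G` and a shortest `(x*,y*)`-path of `H` containing `P` as a subpath. -/
theorem shortestPath_subpath_of_real_shortestPath
    {V : Type*} [Fintype V] (H : SimpleGraph V) (s : Set V) (G : SimpleGraph s)
    (hGconn : G.Connected) (hHconn : H.Connected)
    (hsub : ∀ a b : s, G.Adj a b → H.Adj a b)
    (hiso : ∀ a b : s, G.dist a b = H.dist a b)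
    (hperi : ∀ v : V, Peripheral H v → v ∈ s)
    (x y : V) (P : H.Walk x y) (hP : P.length = H.dist x y) :
    ∃ xs ys : V, xs ∈ s ∧ ys ∈ s ∧ Peripheral H xs ∧ Peripheral H ys ∧
      ∃ Q : H.Walk xs ys, Q.length = H.dist xs ys ∧
        ∃ (q₁ : H.Walk xs x) (q₂ : H.Walk y ys), Q = q₁.append (P.append q₂) := by
  obtain ⟨xs, hxsP, hxs⟩ := exists_peripheral_ext H y x
  obtain ⟨ys, hysP, hys⟩ := exists_peripheral_ext H xs y
  have h1 : H.dist y x + H.dist x xs = H.dist y xs := by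
    have : x ∈ interval H y x := by simp [interval, H.dist_self]
    exact hxs this
  have h2 : H.dist xs y + H.dist y ys = H.dist xs ys := by
    have : y ∈ interval H xs y := by simp [interval, H.dist_self]
    exact hys this
  obtain ⟨q₁, hq₁⟩ := (hHconn xs x).exists_walk_length_eq_dist
  obtain ⟨q₂, hq₂⟩ := (hHconn y ys).exists_walk_length_eq_dist
  refine ⟨xs, ys, hperi _ hxsP, hperi _ hysP, hxsP, hysP,
    q₁.append (P.append q₂), ?_, q₁, q₂, rfl⟩
  rw [Walk.length_append, Walk.length_append, hq₁, hP, hq₂]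
  rw [H.dist_comm (u := y) (v := x), H.dist_comm (u := y) (v := xs)] at h1
  have h3 : H.dist xs x = H.dist x xs := SimpleGraph.dist_comm
  omega
end

section
/- Let H be a graph and G an isometric subgraph of H such that every peripheral vertex of H belongs to V(G). Then for any vertex z of H and any edge xy of H, there exist vertices x*, y* ∈ V(G) with I_H(z,x) ⊆ I_H(z,x*) and I_H(z,y) ⊆ I_H(z,y*), and a shortest (x*,y*)-path P* of H all of whose vertices lie in V(G), such that every vertex w of P* satisfies d_H(z,w) ≥ min(d_H(z,x), d_H(z,y)). -/
open SimpleGraph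

lemma self_mem_interval {V : Type*} (H : SimpleGraph V) (z x : V) :
    x ∈ interval H z x := by
  simp [interval, SimpleGraph.dist_self]

lemma exists_peripheral_above {V : Type*} [Fintype V] (H : SimpleGraph V) (z x : V) :
    ∃ v : V, Peripheral H v ∧ interval H z x ⊆ interval H z v := by
  classical
  have hne : (Finset.univ.filter (fun v => interval H z x ⊆ interval H z v)).Nonempty :=
    ⟨x, by simp⟩
  obtain ⟨v, hv, hmax⟩ := Finset.exists_max_image _ (fun v => (interval H z v).ncard) hne
  simp only [Finset.mem_filter, Finset.mem_univ, true_and] at hv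
  refine ⟨v, ⟨z, fun w hwne hss => ?_⟩, hv⟩
  have hw : w ∈ Finset.univ.filter (fun v => interval H z x ⊆ interval H z v) := by
    simp only [Finset.mem_filter, Finset.mem_univ, true_and]
    exact hv.trans hss.1
  have := hmax w hw
  have hlt : (interval H z v).ncard < (interval H z w).ncard :=
    Set.ncard_lt_ncard hss (Set.toFinite _)
  omega

/-- For any vertex `z` and any edge `xy` of `H`, there are vertices `x*, y* ∈ V(G)` with
`I_H(z,x) ⊆ I_H(z,xs)`, `I_H(z,y) ⊆ I_H(z,ys)`, and a shortest `(x*,y*)`-path of `H`,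
all of whose vertices are real, staying at distance at least `min(d_H(z,x), d_H(z,y))`
from `z`. -/
theorem edge_to_real_avoiding_path
    {V : Type*} [Fintype V] (H : SimpleGraph V) (s : Set V) (G : SimpleGraph s)
    (hGconn : G.Connected) (hHconn : H.Connected)
    (hsub : ∀ a b : s, G.Adj a b → H.Adj a b)
    (hiso : ∀ a b : s, G.dist a b = H.dist a b)
    (hperi : ∀ v : V, Peripheral H v → v ∈ s)
    (z x y : V) (hxy : H.Adj x y) :
    ∃ xs ys : V, xs ∈ s ∧ ys ∈ s ∧
      interval H z x ⊆ interval H z xs ∧ interval H z y ⊆ interval H z ys ∧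
      ∃ P : H.Walk xs ys, P.length = H.dist xs ys ∧
        (∀ w ∈ P.support, w ∈ s) ∧
        (∀ w ∈ P.support, min (H.dist z x) (H.dist z y) ≤ H.dist z w) := by
  classical
  obtain ⟨xs, hxp, hxsub⟩ := exists_peripheral_above H z x
  obtain ⟨ys, hyp, hysub⟩ := exists_peripheral_above H z y
  have hxs : xs ∈ s := hperi xs hxp
  have hys : ys ∈ s := hperi ys hyp
  -- x ∈ I(z, xs), y ∈ I(z, ys)
  have hxI : H.dist z x + H.dist x xs = H.dist z xs := hxsub (self_mem_interval H z x)
  have hyI : H.dist z y + H.dist y ys = H.dist z ys := hysub (self_mem_interval H z y)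
  -- the walk in G
  obtain ⟨Pg, hPg⟩ := hGconn.exists_walk_length_eq_dist ⟨xs, hxs⟩ ⟨ys, hys⟩
  let f : G →g H := ⟨Subtype.val, fun {a b} h => hsub a b h⟩
  refine ⟨xs, ys, hxs, hys, hxsub, hysub, Pg.map f, ?_, ?_, ?_⟩
  · rw [SimpleGraph.Walk.length_map, hPg, hiso]
  · intro w hw
    rw [SimpleGraph.Walk.support_map, List.mem_map] at hw
    obtain ⟨a, -, rfl⟩ := hw
    exact a.2
  · intro w hw
    set P := Pg.map f with hP
    -- split the walk at w
    have hsplit : (P.takeUntil w hw).length + (P.dropUntil w hw).length = P.length := by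
      have := congrArg SimpleGraph.Walk.length (P.take_spec hw)
      rwa [SimpleGraph.Walk.length_append] at this
    have h1 : H.dist xs w ≤ (P.takeUntil w hw).length := SimpleGraph.dist_le _
    have h2 : H.dist w ys ≤ (P.dropUntil w hw).length := SimpleGraph.dist_le _
    have hPlen : P.length = H.dist xs ys := by
      rw [hP, SimpleGraph.Walk.length_map, hPg, hiso]
    -- triangle inequalities
    have t1 : H.dist z xs ≤ H.dist z w + H.dist w xs := hHconn.dist_triangle
    have t2 : H.dist z ys ≤ H.dist z w + H.dist w ys := hHconn.dist_triangle
    have t3 : H.dist xs ys ≤ H.dist xs x + H.dist x y + H.dist y ys := by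
      calc H.dist xs ys ≤ H.dist xs x + H.dist x ys := hHconn.dist_triangle
        _ ≤ H.dist xs x + (H.dist x y + H.dist y ys) := by
            exact Nat.add_le_add_left hHconn.dist_triangle _
        _ = H.dist xs x + H.dist x y + H.dist y ys := by ring
    have hdist1 : H.dist x y = 1 := SimpleGraph.dist_eq_one_iff_adj.mpr hxy
    have hc1 : H.dist w xs = H.dist xs w := SimpleGraph.dist_comm
    have hc2 : H.dist xs x = H.dist x xs := SimpleGraph.dist_comm
    omega
end

section
/- Let H be a graph and G an isometric subgraph of H such that every peripheral vertex of H belongs to V(G). Then for any x, y, z ∈ V(G) and every (x,y)-path P in H, there is an (x,y)-path P* in H all of whose vertices lie in V(G) such that the minimum of d_H(z,w) over vertices w of P* is at least the minimum of d_H(z,w) over vertices w of P. -/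
open SimpleGraph

/-- Every vertex is "dominated" (w.r.t. any basepoint `z`) by a peripheral vertex. -/
lemma exists_peripheral_dom {V : Type*} [Fintype V] (H : SimpleGraph V) (z v : V) :
    ∃ u : V, Peripheral H u ∧ H.dist z v + H.dist v u = H.dist z u := by
  suffices h : ∃ u, interval H z v ⊆ interval H z u ∧
      ∀ w, ¬ interval H z u ⊂ interval H z w by
    obtain ⟨u, hsub, hmax⟩ := h
    refine ⟨u, ⟨z, fun w _ => hmax w⟩, ?_⟩
    have hv : v ∈ interval H z v := by
      simp [interval, SimpleGraph.dist_self]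
    exact hsub hv
  have key : ∀ n (v : V), Fintype.card V ≤ (interval H z v).ncard + n →
      ∃ u, interval H z v ⊆ interval H z u ∧ ∀ w, ¬ interval H z u ⊂ interval H z w := by
    intro n
    induction n with
    | zero =>
      intro v hv
      refine ⟨v, subset_rfl, fun w hw => ?_⟩
      have huniv : interval H z v = Set.univ :=
        Set.eq_of_subset_of_ncard_le (Set.subset_univ _)
          (by rw [Set.ncard_univ, Nat.card_eq_fintype_card]; omega)
      rw [huniv] at hw
      exact hw.2 (Set.subset_univ _)
    | succ n ih =>
      intro v hv
      by_cases hmax : ∀ w, ¬ interval H z v ⊂ interval H z w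
      · exact ⟨v, subset_rfl, hmax⟩
      · push_neg at hmax
        obtain ⟨w, hw⟩ := hmax
        have hlt : (interval H z v).ncard < (interval H z w).ncard :=
          Set.ncard_lt_ncard hw (Set.toFinite _)
        obtain ⟨u, h1, h2⟩ := ih w (by omega)
        exact ⟨u, hw.1.trans h1, h2⟩
  exact key (Fintype.card V) v (by omega)

/-- For any `x, y, z ∈ V(G)` and any `(x,y)`-path `P` in `H`, there is an `(x,y)`-path `P*`
in `H` all of whose vertices are real with `d_H(z, P*) ≥ d_H(z, P)`, i.e., every vertex of
`P*` is at least as far from `z` as the closest vertex of `P` is. -/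
theorem real_path_at_least_as_far
    {V : Type*} [Fintype V] (H : SimpleGraph V) (s : Set V) (G : SimpleGraph s)
    (hGconn : G.Connected) (hHconn : H.Connected)
    (hsub : ∀ a b : s, G.Adj a b → H.Adj a b)
    (hiso : ∀ a b : s, G.dist a b = H.dist a b)
    (hperi : ∀ v : V, Peripheral H v → v ∈ s)
    (x y z : s) (P : H.Walk (x : V) (y : V)) :
    ∃ P' : H.Walk (x : V) (y : V),
      (∀ w ∈ P'.support, w ∈ s) ∧
      ∀ w' ∈ P'.support, ∃ w ∈ P.support, H.dist (z : V) w ≤ H.dist (z : V) w' := by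
  classical
  -- the inclusion homomorphism G →g H
  let f : G →g H := ⟨Subtype.val, fun {a b} h => hsub a b h⟩
  -- dominating peripheral vertices
  have hdom0 := fun v => exists_peripheral_dom H (z : V) v
  choose dom hdomP hdom using hdom0
  let dom' : V → s := fun v => ⟨dom v, hperi _ (hdomP v)⟩
  have hdom' : ∀ v : V, H.dist ↑z v + H.dist v ↑(dom' v) = H.dist ↑z ↑(dom' v) :=
    fun v => hdom v
  -- segment lemma
  have seg : ∀ (a b : V) (a' b' : s), H.dist a b ≤ 1 →
      H.dist ↑z a + H.dist a ↑a' = H.dist ↑z ↑a' →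
      H.dist ↑z b + H.dist b ↑b' = H.dist ↑z ↑b' →
      ∃ Q : G.Walk a' b', ∀ w ∈ Q.support,
        H.dist ↑z a ≤ H.dist ↑z ↑w ∨ H.dist ↑z b ≤ H.dist ↑z ↑w := by
    intro a b a' b' hab ha hb
    obtain ⟨Q, hQ⟩ := hGconn.exists_walk_length_eq_dist a' b'
    refine ⟨Q, fun w hw => ?_⟩
    have h1 : G.dist a' w + G.dist w b' ≤ Q.length := by
      calc G.dist a' w + G.dist w b'
          ≤ (Q.takeUntil w hw).length + (Q.dropUntil w hw).length :=
            Nat.add_le_add (dist_le _) (dist_le _)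
        _ = Q.length := by rw [← Walk.length_append, Q.take_spec hw]
    rw [hQ, hiso a' w, hiso w b', hiso a' b'] at h1
    have t1 : H.dist ↑z ↑a' ≤ H.dist ↑z ↑w + H.dist ↑w ↑a' := hHconn.dist_triangle
    have t2 : H.dist ↑z ↑b' ≤ H.dist ↑z ↑w + H.dist ↑w ↑b' := hHconn.dist_triangle
    have t3 : H.dist ↑a' ↑b' ≤ H.dist ↑a' a + H.dist a ↑b' := hHconn.dist_triangle
    have t4 : H.dist a ↑b' ≤ H.dist a b + H.dist b ↑b' := hHconn.dist_triangle
    have c1 : H.dist ↑w ↑a' = H.dist ↑a' ↑w := dist_comm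
    have c2 : H.dist ↑a' a = H.dist a ↑a' := dist_comm
    omega
  -- chain lemma along the walk P
  have chain : ∀ (a b : V) (W : H.Walk a b), ∃ Q : G.Walk (dom' a) (dom' b),
      ∀ w ∈ Q.support, ∃ v ∈ W.support, H.dist ↑z v ≤ H.dist ↑z ↑w := by
    intro a b W
    induction W with
    | nil =>
      rename_i a0
      refine ⟨Walk.nil, fun w hw => ?_⟩
      rw [Walk.support_nil, List.mem_singleton] at hw
      subst hw
      refine ⟨a0, by simp, ?_⟩
      have := hdom' a0
      omega
    | cons h W' ih =>
      rename_i u0 v0 w0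
      obtain ⟨Q', hQ'⟩ := ih
      have hab : H.dist u0 v0 ≤ 1 := le_of_eq (dist_eq_one_iff_adj.2 h)
      obtain ⟨Q0, hQ0⟩ := seg u0 v0 (dom' u0) (dom' v0) hab (hdom' u0) (hdom' v0)
      refine ⟨Q0.append Q', fun w hw => ?_⟩
      rw [Walk.support_append, List.mem_append] at hw
      have hv0 : v0 ∈ (Walk.cons h W').support := by
        rw [Walk.support_cons]
        exact List.mem_cons_of_mem _ (Walk.start_mem_support _)
      rcases hw with hw | hw
      · rcases hQ0 w hw with h1 | h1
        · exact ⟨u0, Walk.start_mem_support _, h1⟩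
        · exact ⟨v0, hv0, h1⟩
      · obtain ⟨v, hv, hle⟩ := hQ' w (List.mem_of_mem_tail hw)
        have hv' : v ∈ (Walk.cons h W').support := by
          rw [Walk.support_cons]
          exact List.mem_cons_of_mem _ hv
        exact ⟨v, hv', hle⟩
  obtain ⟨Qc, hQc⟩ := chain (x : V) (y : V) P
  have hx1 : H.dist ↑z ↑x + H.dist ↑x ↑x = H.dist ↑z ↑x := by
    rw [SimpleGraph.dist_self, add_zero]
  have hy1 : H.dist ↑z ↑y + H.dist ↑y ↑y = H.dist ↑z ↑y := by
    rw [SimpleGraph.dist_self, add_zero]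
  obtain ⟨Qx, hQx⟩ := seg (↑x) (↑x) x (dom' ↑x)
    (by rw [SimpleGraph.dist_self]; omega) hx1 (hdom' ↑x)
  obtain ⟨Qy, hQy⟩ := seg (↑y) (↑y) (dom' ↑y) y
    (by rw [SimpleGraph.dist_self]; omega) (hdom' ↑y) hy1
  let Qbig : G.Walk x y := (Qx.append Qc).append Qy
  have hbig : ∀ u ∈ Qbig.support, ∃ v ∈ P.support, H.dist ↑z v ≤ H.dist ↑z ↑u := by
    intro u hu
    have : u ∈ Qx.support ∨ u ∈ Qc.support ∨ u ∈ Qy.support := by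
      simp only [Qbig, Walk.support_append, List.mem_append] at hu
      rcases hu with (hu | hu) | hu
      · exact Or.inl hu
      · exact Or.inr (Or.inl (List.mem_of_mem_tail hu))
      · exact Or.inr (Or.inr (List.mem_of_mem_tail hu))
    rcases this with hu | hu | hu
    · rcases hQx u hu with h1 | h1 <;> exact ⟨↑x, Walk.start_mem_support _, h1⟩
    · exact hQc u hu
    · rcases hQy u hu with h1 | h1 <;> exact ⟨↑y, Walk.end_mem_support _, h1⟩
  refine ⟨Qbig.map f, ?_, ?_⟩
  · intro w hw
    rw [Walk.support_map] at hw
    obtain ⟨u, _, rfl⟩ := List.mem_map.1 hw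
    exact u.2
  · intro w' hw'
    rw [Walk.support_map] at hw'
    obtain ⟨u, hu, rfl⟩ := List.mem_map.1 hw'
    exact hbig u hu
end

section
/- Let H be a graph and G an isometric subgraph of H such that every peripheral vertex of H belongs to V(G). Then G and H have the same hyperbolicity: for every nonnegative integer k, every quadruple of vertices of H satisfies Gromov's four-point condition with parameter k if and only if every quadruple of vertices of G does. In particular, δ(G) = δ(H). -/
open SimpleGraph

/-- Gromov's four-point condition with parameter `k` (`k = 2δ`): for every quadruple the
two largest of the three distance sums differ by at most `k`; equivalently, every one of
the three sums is at most the maximum of the other two plus `k`. -/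
def GromovFourPoint {V : Type*} (G : SimpleGraph V) (k : ℕ) : Prop :=
  ∀ u v w x : V,
    G.dist u v + G.dist w x ≤ max (G.dist u w + G.dist v x) (G.dist u x + G.dist v w) + k

/-- `G` and its host `H` (in particular, the injective hull of `G`) have the same
hyperbolicity: `H` satisfies Gromov's four point condition with parameter `k` iff `G`
does. In particular `δ(G) = δ(H)`. -/
theorem hyperbolicity_eq_of_isometric_host
    {V : Type*} [Fintype V] (H : SimpleGraph V) (s : Set V) (G : SimpleGraph s)
    (hGconn : G.Connected) (hHconn : H.Connected)
    (hsub : ∀ a b : s, G.Adj a b → H.Adj a b)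
    (hiso : ∀ a b : s, G.dist a b = H.dist a b)
    (hperi : ∀ v : V, Peripheral H v → v ∈ s) :
    ∀ k : ℕ, GromovFourPoint H k ↔ GromovFourPoint G k := by
  intro k
  constructor
  · intro hH a b c d
    simp only [hiso]
    exact hH a b c d
  · intro hG
    by_contra hbad
    unfold GromovFourPoint at hbad
    push_neg at hbad
    obtain ⟨u₀, v₀, w₀, x₀, hbad⟩ := hbad
    -- integer-valued distance
    set dd : V → V → ℤ := fun a b => (H.dist a b : ℤ) with hdd
    have dd_comm : ∀ a b, dd a b = dd b a := by
      intro a b; simp only [hdd]; rw [SimpleGraph.dist_comm]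
    have dd_nonneg : ∀ a b, 0 ≤ dd a b := by intro a b; positivity
    have dd_tri : ∀ a b c, dd a c ≤ dd a b + dd b c := by
      intro a b c
      simp only [hdd]
      exact_mod_cast hHconn.dist_triangle
    -- a bound on all distances
    set M : ℤ := 2 * ∑ p : V × V, dd p.1 p.2 with hM
    have dd_le : ∀ a b, dd a b ≤ ∑ p : V × V, dd p.1 p.2 := by
      intro a b
      exact Finset.single_le_sum (f := fun p : V × V => dd p.1 p.2)
        (fun p _ => dd_nonneg p.1 p.2) (Finset.mem_univ (a, b))
    have hsum0 : 0 ≤ ∑ p : V × V, dd p.1 p.2 :=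
      Finset.sum_nonneg fun p _ => dd_nonneg p.1 p.2
    have hM0 : 0 ≤ M := by rw [hM]; linarith
    -- the three sums and the objective function
    set S1 : V → V → V → V → ℤ := fun a b c d => dd a b + dd c d with hS1
    set Dfct : V → V → V → V → ℤ :=
      fun a b c d => S1 a b c d - max (S1 a c b d) (S1 a d b c) with hD
    set f : V → V → V → V → ℤ :=
      fun a b c d => (M + 1) * Dfct a b c d + S1 a b c d with hf
    have hS1M : ∀ a b c d, S1 a b c d ≤ M := by
      intro a b c d
      have h1 := dd_le a b
      have h2 := dd_le c d
      simp only [hS1]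
      rw [hM]
      linarith
    have hS1nn : ∀ a b c d, 0 ≤ S1 a b c d := by
      intro a b c d; exact add_nonneg (dd_nonneg a b) (dd_nonneg c d)
    -- choose a maximizing quadruple
    obtain ⟨q, -, hq⟩ := Finset.exists_max_image (Finset.univ : Finset (V × V × V × V))
      (fun q => f q.1 q.2.1 q.2.2.1 q.2.2.2) ⟨(u₀, v₀, w₀, x₀), Finset.mem_univ _⟩
    obtain ⟨a, b, c, d⟩ := q
    have hmax : ∀ p q r t : V, f p q r t ≤ f a b c d := by
      intro p q r t; exact hq (p, q, r, t) (Finset.mem_univ _)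
    -- the maximizing quadruple has defect > k
    have hDbad : (k : ℤ) < Dfct u₀ v₀ w₀ x₀ := by
      have h : max ((H.dist u₀ w₀ : ℤ) + H.dist v₀ x₀)
          ((H.dist u₀ x₀ : ℤ) + H.dist v₀ w₀) + (k : ℤ)
          < (H.dist u₀ v₀ : ℤ) + H.dist w₀ x₀ := by exact_mod_cast hbad
      simp only [hD, hS1, hdd]
      linarith
    have hDmax : (k : ℤ) < Dfct a b c d := by
      by_contra hle
      push_neg at hle
      have h1 : Dfct a b c d + 1 ≤ Dfct u₀ v₀ w₀ x₀ := by omega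
      have h2 := hmax u₀ v₀ w₀ x₀
      have h3 : (M + 1) * (Dfct a b c d + 1) ≤ (M + 1) * Dfct u₀ v₀ w₀ x₀ :=
        mul_le_mul_of_nonneg_left h1 (by linarith)
      have h4 := hS1M a b c d
      have h5 := hS1nn u₀ v₀ w₀ x₀
      simp only [hf] at h2
      nlinarith
    -- main step: the first coordinate of a maximizing quadruple is peripheral
    have key : ∀ p q r t : V, (∀ p' q' r' t' : V, f p' q' r' t' ≤ f p q r t) →
        Peripheral H p := by
      intro p q r t hm
      by_contra hnp
      unfold Peripheral at hnp
      push_neg at hnp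
      obtain ⟨z, hzp, hsub'⟩ := hnp q
      -- p lies in interval q z
      have hpI : p ∈ interval H q z := hsub'.1 (by simp [interval, SimpleGraph.dist_self])
      have hpI' : H.dist q p + H.dist p z = H.dist q z := by
        simpa only [interval, Set.mem_setOf_eq] using hpI
      have hqz : dd q p + dd p z = dd q z := by
        simp only [hdd]; exact_mod_cast hpI'
      have hpos : 0 < dd p z := by
        have h0 := hHconn.pos_dist_of_ne hzp.symm
        simp only [hdd]
        exact_mod_cast h0
      -- compare f z q r t with f p q r t
      have e1 : S1 z q r t = S1 p q r t + dd p z := by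
        simp only [hS1]
        rw [dd_comm z q, ← hqz, dd_comm q p]
        ring
      have e2 : S1 z r q t ≤ S1 p r q t + dd p z := by
        simp only [hS1]
        have h' := dd_tri z p r
        have h'' : dd z p = dd p z := dd_comm z p
        linarith
      have e3 : S1 z t q r ≤ S1 p t q r + dd p z := by
        simp only [hS1]
        have h' := dd_tri z p t
        have h'' : dd z p = dd p z := dd_comm z p
        linarith
      have emax : max (S1 z r q t) (S1 z t q r) ≤ max (S1 p r q t) (S1 p t q r) + dd p z := by
        apply max_le
        · exact le_trans e2 (by gcongr; exact le_max_left _ _)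
        · exact le_trans e3 (by gcongr; exact le_max_right _ _)
      have eD : Dfct p q r t ≤ Dfct z q r t := by
        simp only [hD]
        rw [e1]
        linarith
      have hlt : f p q r t < f z q r t := by
        simp only [hf]
        have h3 : (M + 1) * Dfct p q r t ≤ (M + 1) * Dfct z q r t :=
          mul_le_mul_of_nonneg_left eD (by linarith)
        rw [e1]
        linarith
      exact absurd (hm z q r t) (not_le.mpr hlt)
    -- symmetries of f
    have fswap : ∀ p q r t : V, f q p r t = f p q r t := by
      intro p q r t
      have s1 : S1 q p r t = S1 p q r t := by simp only [hS1]; rw [dd_comm q p]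
      have s2 : S1 q r p t = S1 p t q r := by simp only [hS1]; rw [add_comm]
      have s3 : S1 q t p r = S1 p r q t := by simp only [hS1]; rw [add_comm]
      simp only [hf, hD]
      rw [s1, s2, s3, max_comm]
    have fpair : ∀ p q r t : V, f r t p q = f p q r t := by
      intro p q r t
      have s1 : S1 r t p q = S1 p q r t := by simp only [hS1]; rw [add_comm]
      have s2 : S1 r p t q = S1 p r q t := by
        simp only [hS1]; rw [dd_comm r p, dd_comm t q]
      have s3 : S1 r q t p = S1 p t q r := by
        simp only [hS1]; rw [dd_comm r q, dd_comm t p, add_comm]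
      simp only [hf, hD]
      rw [s1, s2, s3]
    -- all four vertices are peripheral, hence in s
    have hpa : Peripheral H a := key a b c d hmax
    have hpb : Peripheral H b := key b a c d (fun p' q' r' t' => by
      rw [← fswap b a c d]; exact hmax p' q' r' t')
    have hpc : Peripheral H c := key c d a b (fun p' q' r' t' => by
      rw [fpair a b c d]; exact hmax p' q' r' t')
    have hpd : Peripheral H d := key d c a b (fun p' q' r' t' => by
      rw [fswap c d a b, fpair a b c d]; exact hmax p' q' r' t')
    -- contradiction using G's four-point condition
    have hGk := hG ⟨a, hperi a hpa⟩ ⟨b, hperi b hpb⟩ ⟨c, hperi c hpc⟩ ⟨d, hperi d hpd⟩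
    simp only [hiso] at hGk
    have hGk' : S1 a b c d ≤ max (S1 a c b d) (S1 a d b c) + (k : ℤ) := by
      simp only [hS1, hdd]
      exact_mod_cast hGk
    simp only [hD] at hDmax
    linarith
end

section
/- Let H be a graph and G an isometric subgraph of H such that every peripheral vertex of H belongs to V(G). If H is AT-free, then every vertex of H is at distance at most 1 from some vertex of V(G). -/
open SimpleGraph

/-- A walk avoids the closed neighborhood of `z` if none of its vertices equals `z` or is
adjacent to `z`. -/
def AvoidsClosedNbhd {V : Type*} (H : SimpleGraph V) (z : V) {x y : V}
    (p : H.Walk x y) : Prop :=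
  ∀ w ∈ p.support, w ≠ z ∧ ¬ H.Adj z w

/-- A graph is AT-free if it has no asteroidal triple: three pairwise distinct,
pairwise nonadjacent vertices such that every pair is joined by a path avoiding the
closed neighborhood of the third. -/
def ATFree {V : Type*} (H : SimpleGraph V) : Prop :=
  ¬ ∃ x y z : V, x ≠ y ∧ y ≠ z ∧ x ≠ z ∧
      ¬ H.Adj x y ∧ ¬ H.Adj y z ∧ ¬ H.Adj x z ∧
      (∃ p : H.Walk x y, AvoidsClosedNbhd H z p) ∧
      (∃ p : H.Walk y z, AvoidsClosedNbhd H x p) ∧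
      (∃ p : H.Walk x z, AvoidsClosedNbhd H y p)

/-- Every vertex lies in an interval `I(y,x)` with `x` peripheral. -/
lemma exists_peripheral_through {V : Type*} [Fintype V] (H : SimpleGraph V) (y v : V) :
    ∃ x : V, Peripheral H x ∧ v ∈ interval H y v ∧ interval H y v ⊆ interval H y x := by
  classical
  let S : Finset V := Finset.univ.filter (fun z => interval H y v ⊆ interval H y z)
  have hvS : v ∈ S := by
    simp [S, Finset.mem_filter]
  obtain ⟨x, hxS, hmax⟩ := S.exists_max_image (fun z => (interval H y z).ncard) ⟨v, hvS⟩
  have hxsub : interval H y v ⊆ interval H y x := (Finset.mem_filter.mp hxS).2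
  refine ⟨x, ⟨y, fun z _ hss => ?_⟩, ?_, hxsub⟩
  · have hzS : z ∈ S := by
      simp only [S, Finset.mem_filter, Finset.mem_univ, true_and]
      exact hxsub.trans hss.subset
    have := hmax z hzS
    have hlt : (interval H y x).ncard < (interval H y z).ncard :=
      Set.ncard_lt_ncard hss (Set.toFinite _)
    omega
  · show H.dist y v + H.dist v v = H.dist y v
    simp [SimpleGraph.dist_self]

/-- If the host `H` (in particular the injective hull of `G`) is AT-free, then every
vertex of `H` is within distance `1` of a real vertex (i.e., the Helly-gap is at most 1). -/
theorem dist_le_one_of_ATFree_host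
    {V : Type*} [Fintype V] (H : SimpleGraph V) (s : Set V) (G : SimpleGraph s)
    (hGconn : G.Connected) (hHconn : H.Connected)
    (hsub : ∀ a b : s, G.Adj a b → H.Adj a b)
    (hiso : ∀ a b : s, G.dist a b = H.dist a b)
    (hperi : ∀ v : V, Peripheral H v → v ∈ s)
    (hAT : ATFree H) :
    ∀ v : V, ∃ u ∈ s, H.dist v u ≤ 1 := by
  classical
  intro v
  by_contra hcon
  push_neg at hcon
  have hfar : ∀ u ∈ s, 2 ≤ H.dist v u := fun u hu => (hcon u hu)
  -- pick a basepoint in s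
  have hne : Nonempty s := hGconn.nonempty
  obtain ⟨a⟩ := hne
  have has : (a : V) ∈ s := a.2
  -- get a peripheral vertex b with v on a shortest (a,b)-path
  obtain ⟨b, hbper, hvI, hsubI⟩ := exists_peripheral_through H (a : V) v
  have hbs : b ∈ s := hperi b hbper
  have hvb : H.dist (a : V) v + H.dist v b = H.dist (a : V) b := hsubI hvI
  -- distances
  have h2a : 2 ≤ H.dist v (a : V) := hfar _ has
  have h2b : 2 ≤ H.dist v b := hfar _ hbs
  have h2a' : 2 ≤ H.dist (a : V) v := by rwa [SimpleGraph.dist_comm]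
  have hab : 4 ≤ H.dist (a : V) b := by omega
  -- helper: adjacency gives dist = 1
  have adj_dist : ∀ x y : V, H.Adj x y → H.dist x y = 1 := fun x y h =>
    SimpleGraph.dist_eq_one_iff_adj.mpr h
  -- walk from a to b inside s
  obtain ⟨q⟩ := hGconn a ⟨b, hbs⟩
  let f : G →g H := ⟨Subtype.val, fun h => hsub _ _ h⟩
  have hab_walk : ∃ p : H.Walk (a : V) b, AvoidsClosedNbhd H v p := by
    refine ⟨q.map f, fun w hw => ?_⟩
    rw [SimpleGraph.Walk.support_map, List.mem_map] at hw
    obtain ⟨u, _, rfl⟩ := hw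
    have hus : (f u : V) ∈ s := (u : s).2
    constructor
    · rintro rfl
      have := hfar _ hus
      simp [SimpleGraph.dist_self] at this
    · intro hadj
      have := hfar _ hus
      rw [adj_dist _ _ hadj] at this
      omega
  -- shortest walk from a to v avoids N[b]
  obtain ⟨p1, hp1⟩ := hHconn.exists_walk_length_eq_dist (a : V) v
  have hav_walk : AvoidsClosedNbhd H b p1 := by
    intro w hw
    have h1 : H.dist (a : V) w ≤ (p1.takeUntil w hw).length := SimpleGraph.dist_le _
    have h2 : H.dist w v ≤ (p1.dropUntil w hw).length := SimpleGraph.dist_le _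
    have h3 : (p1.takeUntil w hw).length + (p1.dropUntil w hw).length = p1.length := by
      rw [← SimpleGraph.Walk.length_append, p1.take_spec hw]
    have hsplit : H.dist (a : V) w + H.dist w v ≤ H.dist (a : V) v := by omega
    have htri : H.dist (a : V) b ≤ H.dist (a : V) w + H.dist w b := hHconn.dist_triangle
    have hwb : 2 ≤ H.dist w b := by omega
    constructor
    · rintro rfl; simp [SimpleGraph.dist_self] at hwb
    · intro hadj
      rw [SimpleGraph.dist_comm, adj_dist _ _ hadj] at hwb
      omega
  -- shortest walk from v to b avoids N[a]
  obtain ⟨p2, hp2⟩ := hHconn.exists_walk_length_eq_dist v b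
  have hvb_walk : AvoidsClosedNbhd H (a : V) p2 := by
    intro w hw
    have h1 : H.dist v w ≤ (p2.takeUntil w hw).length := SimpleGraph.dist_le _
    have h2 : H.dist w b ≤ (p2.dropUntil w hw).length := SimpleGraph.dist_le _
    have h3 : (p2.takeUntil w hw).length + (p2.dropUntil w hw).length = p2.length := by
      rw [← SimpleGraph.Walk.length_append, p2.take_spec hw]
    have hsplit : H.dist v w + H.dist w b ≤ H.dist v b := by omega
    have htri : H.dist (a : V) b ≤ H.dist (a : V) w + H.dist w b := hHconn.dist_triangle
    have hwa : 2 ≤ H.dist (a : V) w := by omega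
    constructor
    · rintro rfl; simp [SimpleGraph.dist_self] at hwa
    · intro hadj
      rw [adj_dist _ _ hadj] at hwa
      omega
  -- assemble the asteroidal triple (a, v, b)
  apply hAT
  refine ⟨(a : V), v, b, ?_, ?_, ?_, ?_, ?_, ?_, ⟨p1, hav_walk⟩, ⟨p2, hvb_walk⟩, hab_walk⟩
  · rintro rfl; simp [SimpleGraph.dist_self] at h2a
  · rintro rfl; simp [SimpleGraph.dist_self] at h2b
  · rintro rfl; simp [SimpleGraph.dist_self] at hab
  · intro h; rw [adj_dist _ _ h] at h2a'; omega
  · intro h; rw [adj_dist _ _ h] at h2b; omega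
  · intro h; rw [adj_dist _ _ h] at hab; omega
end

section
/- Let G be a Helly graph and let v be a vertex of G such that there exists a vertex y ≠ v of G with N_G[v] ⊆ N_G[y]. Let H be obtained from G by adding a new vertex u adjacent exactly to the neighbors of v in G and not to v itself (a false twin of v, so that N_H(u) = N_H(v)). Then H is Helly. -/
open SimpleGraph

/-- A graph is Helly if every family of pairwise intersecting disks has a common vertex. -/
def HellyGraph {V : Type*} (G : SimpleGraph V) : Prop :=
  ∀ (S : Set V) (r : V → ℕ),
    (∀ u ∈ S, ∀ v ∈ S, ∃ w, G.dist u w ≤ r u ∧ G.dist v w ≤ r v) →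
    ∃ c, ∀ v ∈ S, G.dist v c ≤ r v

/-- Adding a false twin of a vertex `v` whose closed neighborhood is dominated by another
vertex keeps the graph Helly. Here `H` is the graph on `Option V` obtained from `G` by
adding the new vertex `none` adjacent exactly to the neighbors of `v` in `G` (so that
`N_H(none) = N_H(some v)`). -/
theorem helly_add_false_twin
    {V : Type*} [Fintype V] (G : SimpleGraph V) (hconn : G.Connected)
    (hHelly : HellyGraph G) (v : V)
    (hdom : ∃ y : V, y ≠ v ∧ ∀ w : V, (w = v ∨ G.Adj v w) → (w = y ∨ G.Adj y w))
    (H : SimpleGraph (Option V))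
    (hGadj : ∀ a b : V, H.Adj (some a) (some b) ↔ G.Adj a b)
    (htwin : ∀ a : V, H.Adj none (some a) ↔ G.Adj v a) :
    HellyGraph H := by
  classical
  obtain ⟨y, hyv, hy⟩ := hdom
  have hvy : G.Adj v y := by
    have := hy v (Or.inl rfl)
    rcases this with h | h
    · exact absurd h.symm hyv
    · exact h.symm
  -- the projection is a graph homomorphism H →g G
  have hfadj : ∀ x x' : Option V, H.Adj x x' → G.Adj (x.getD v) (x'.getD v) := by
    intro x x' h
    match x, x' with
    | some a, some b => exact (hGadj a b).mp h
    | some a, none =>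
      exact ((htwin a).mp h.symm).symm
    | none, some b => exact (htwin b).mp h
    | none, none => exact absurd h (H.loopless.irrefl none)
  let f : H →g G := ⟨fun o => o.getD v, fun h => hfadj _ _ h⟩
  let g : G →g H := ⟨some, fun h => (hGadj _ _).mpr h⟩
  have hg : ∀ a b : V, H.Reachable (some a) (some b) := by
    intro a b
    exact (hconn a b).map g
  have hHconn : H.Connected := by
    rw [connected_iff]
    refine ⟨fun x x' => ?_, ⟨none⟩⟩
    match x, x' with
    | some a, some b => exact hg a b
    | some a, none =>
      exact (hg a y).trans (Adj.reachable ((htwin y).mpr hvy)).symm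
    | none, some b => exact ((Adj.reachable ((htwin y).mpr hvy))).trans (hg y b)
    | none, none => exact Reachable.refl _
  -- projection decreases distances
  have lemA : ∀ x x' : Option V, G.dist (x.getD v) (x'.getD v) ≤ H.dist x x' := by
    intro x x'
    obtain ⟨p, hp⟩ := hHconn.exists_walk_length_eq_dist x x'
    calc G.dist (x.getD v) (x'.getD v) ≤ (p.map f).length := G.dist_le _
    _ = p.length := p.length_map f
    _ = H.dist x x' := hp
  have lemB : ∀ a b : V, H.dist (some a) (some b) ≤ G.dist a b := by
    intro a b
    obtain ⟨p, hp⟩ := hconn.exists_walk_length_eq_dist a b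
    calc H.dist (some a) (some b) ≤ (p.map g).length := H.dist_le _
    _ = p.length := p.length_map g
    _ = G.dist a b := hp
  have lemC : ∀ a : V, a ≠ v → H.dist none (some a) ≤ G.dist v a := by
    intro a hav
    obtain ⟨p, hp⟩ := hconn.exists_walk_length_eq_dist v a
    cases p with
    | nil => exact absurd rfl (Ne.symm hav)
    | @cons _ w _ h q =>
      have h1 : H.dist none (some w) ≤ 1 :=
        H.dist_le (SimpleGraph.Walk.cons ((htwin w).mpr h) SimpleGraph.Walk.nil)
      calc H.dist none (some a) ≤ H.dist none (some w) + H.dist (some w) (some a) :=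
            hHconn.dist_triangle
      _ ≤ 1 + G.dist w a := Nat.add_le_add h1 (lemB w a)
      _ ≤ 1 + q.length := Nat.add_le_add_left (G.dist_le q) 1
      _ = G.dist v a := by rw [SimpleGraph.Walk.length_cons] at hp; omega
  have lemD : ∀ a : V, G.dist a y ≤ max (G.dist a v) 1 := by
    intro a
    by_cases hav : a = v
    · subst hav
      have : G.dist a y ≤ 1 := G.dist_le (SimpleGraph.Walk.cons hvy SimpleGraph.Walk.nil)
      exact le_trans this (le_max_right _ _)
    · obtain ⟨p, hp⟩ := hconn.exists_walk_length_eq_dist v a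
      cases p with
      | nil => exact absurd rfl (Ne.symm hav)
      | @cons _ w _ h q =>
        rcases hy w (Or.inr h) with hw | hw
        · rw [← hw]
          have h2 : G.dist a w ≤ q.length := by
            rw [G.dist_comm]; exact G.dist_le q
          refine le_trans h2 (le_trans ?_ (le_max_left _ _))
          rw [SimpleGraph.Walk.length_cons] at hp
          rw [G.dist_comm]
          omega
        · have h1 : G.dist w y ≤ 1 :=
            G.dist_le (SimpleGraph.Walk.cons hw.symm SimpleGraph.Walk.nil)
          have h2 : G.dist a w ≤ q.length := by
            rw [G.dist_comm]; exact G.dist_le q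
          calc G.dist a y ≤ G.dist a w + G.dist w y := hconn.dist_triangle
          _ ≤ q.length + 1 := Nat.add_le_add h2 h1
          _ = G.dist v a := by rw [SimpleGraph.Walk.length_cons] at hp; omega
          _ = G.dist a v := G.dist_comm
          _ ≤ max (G.dist a v) 1 := le_max_left _ _
  -- main argument
  intro S r hpair
  by_cases hzero : ∃ x₀ ∈ S, r x₀ = 0
  · obtain ⟨x₀, hx₀S, hx₀⟩ := hzero
    refine ⟨x₀, fun x hx => ?_⟩
    obtain ⟨w, hw1, hw2⟩ := hpair x hx x₀ hx₀S
    rw [hx₀, Nat.le_zero] at hw2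
    have hwx : x₀ = w := hHconn.dist_eq_zero_iff.mp hw2
    rw [hwx]; exact hw1
  · push_neg at hzero
    have hpos : ∀ x ∈ S, 1 ≤ r x := fun x hx => Nat.one_le_iff_ne_zero.mpr (hzero x hx)
    set S' : Set V := (fun o : Option V => o.getD v) '' S with hS'
    set r' : V → ℕ := fun a => sInf {n | ∃ x ∈ S, x.getD v = a ∧ r x = n} with hr'
    have hr'le : ∀ x ∈ S, r' (x.getD v) ≤ r x := fun x hx => Nat.sInf_le ⟨x, hx, rfl, rfl⟩
    have hr'mem : ∀ a ∈ S', ∃ x ∈ S, x.getD v = a ∧ r x = r' a := by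
      rintro a ⟨x, hx, hxa⟩
      have hne : {n | ∃ x ∈ S, x.getD v = a ∧ r x = n}.Nonempty := ⟨r x, x, hx, hxa, rfl⟩
      exact Nat.sInf_mem hne
    have hGpair : ∀ a ∈ S', ∀ b ∈ S', ∃ w, G.dist a w ≤ r' a ∧ G.dist b w ≤ r' b := by
      intro a ha b hb
      obtain ⟨xa, hxaS, hxa, hra⟩ := hr'mem a ha
      obtain ⟨xb, hxbS, hxb, hrb⟩ := hr'mem b hb
      obtain ⟨w, hw1, hw2⟩ := hpair xa hxaS xb hxbS
      refine ⟨w.getD v, ?_, ?_⟩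
      · rw [← hra, ← hxa]; exact le_trans (lemA xa w) hw1
      · rw [← hrb, ← hxb]; exact le_trans (lemA xb w) hw2
    obtain ⟨c, hc⟩ := hHelly S' r' hGpair
    have hc' : ∀ x ∈ S, G.dist (x.getD v) c ≤ r x :=
      fun x hx => le_trans (hc _ ⟨x, hx, rfl⟩) (hr'le x hx)
    by_cases hcv : c = v
    · refine ⟨some y, fun x hx => ?_⟩
      cases x with
      | none =>
        have : H.dist none (some y) ≤ 1 :=
          H.dist_le (SimpleGraph.Walk.cons ((htwin y).mpr hvy) SimpleGraph.Walk.nil)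
        exact le_trans this (hpos none hx)
      | some a =>
        have h1 : G.dist a v ≤ r (some a) := by
          have := hc' (some a) hx; rwa [hcv] at this
        calc H.dist (some a) (some y) ≤ G.dist a y := lemB a y
        _ ≤ max (G.dist a v) 1 := lemD a
        _ ≤ r (some a) := max_le h1 (hpos (some a) hx)
    · refine ⟨some c, fun x hx => ?_⟩
      cases x with
      | none => exact le_trans (lemC c (Ne.symm (fun h => hcv h.symm))) (hc' none hx)
      | some a => exact le_trans (lemB a c) (hc' (some a) hx)
end

section
/- Let G be a graph and H a Helly graph such that G is an isometric subgraph of H. If G has at least k unsuspended maximal 2-sets, then |V(H) \ V(G)| ≥ k. (In particular, the injective hull of G contains at least k vertices not in G.) -/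
open SimpleGraph

/-- A set is a 2-set if its vertices are pairwise at distance at most 2. -/
def TwoSet {V : Type*} (G : SimpleGraph V) (S : Set V) : Prop :=
  ∀ a ∈ S, ∀ b ∈ S, G.dist a b ≤ 2

/-- A 2-set is maximal if it is maximal by inclusion among 2-sets. -/
def MaximalTwoSet {V : Type*} (G : SimpleGraph V) (S : Set V) : Prop :=
  TwoSet G S ∧ ∀ T : Set V, TwoSet G T → S ⊆ T → T = S

/-- A set `M` is suspended if some vertex `c` is adjacent to every vertex of `M \ {c}`. -/
def Suspended {V : Type*} (G : SimpleGraph V) (M : Set V) : Prop :=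
  ∃ c : V, ∀ v ∈ M, v ≠ c → G.Adj c v


private lemma exists_mid_of_dist_le_two {V : Type*} (H : SimpleGraph V) {u v : V}
    (hr : H.Reachable u v) (hd : H.dist u v ≤ 2) :
    ∃ w, H.dist u w ≤ 1 ∧ H.dist v w ≤ 1 := by
  obtain ⟨p, hp⟩ := hr.exists_walk_length_eq_dist
  cases p with
  | nil => exact ⟨u, by simp [SimpleGraph.dist_self], by simp [SimpleGraph.dist_self]⟩
  | cons h q =>
    rename_i x
    refine ⟨x, ?_, ?_⟩
    · exact le_trans (SimpleGraph.dist_le (SimpleGraph.Walk.cons h SimpleGraph.Walk.nil)) (by simp)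
    · have hq : q.length ≤ 1 := by
        have := hp ▸ hd
        simp [SimpleGraph.Walk.length_cons] at this
        omega
      calc H.dist v x = H.dist x v := SimpleGraph.dist_comm ..
        _ ≤ q.length := SimpleGraph.dist_le q
        _ ≤ 1 := hq

/-- If `G` has at least `k` unsuspended maximal 2-sets, then any Helly graph `H`
containing `G` as an isometric subgraph has at least `k` vertices outside `G`. -/
theorem helly_host_card_of_unsuspended_twoSets
    {V : Type*} [Fintype V] (H : SimpleGraph V) (s : Set V) (G : SimpleGraph s)
    (hGconn : G.Connected) (hHconn : H.Connected)
    (hsub : ∀ a b : s, G.Adj a b → H.Adj a b)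
    (hiso : ∀ a b : s, G.dist a b = H.dist a b)
    (hHelly : HellyGraph H)
    (k : ℕ) (f : Fin k → Set s) (hfinj : Function.Injective f)
    (hf : ∀ i, MaximalTwoSet G (f i) ∧ ¬ Suspended G (f i)) :
    k ≤ (sᶜ : Set V).ncard := by
  classical
  -- For each i, find a center c ∉ s close to all of f i.
  have key : ∀ i : Fin k, ∃ c : V, c ∉ s ∧ ∀ v : s, v ∈ f i → H.dist ↑v c ≤ 1 := by
    intro i
    obtain ⟨⟨htwo, hmax⟩, hns⟩ := hf i
    have hpair : ∀ u ∈ (Subtype.val '' f i), ∀ v ∈ (Subtype.val '' f i),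
        ∃ w, H.dist u w ≤ (fun _ => 1) u ∧ H.dist v w ≤ (fun _ => 1) v := by
      rintro _ ⟨a, ha, rfl⟩ _ ⟨b, hb, rfl⟩
      have hd : H.dist ↑a ↑b ≤ 2 := by rw [← hiso]; exact htwo a ha b hb
      exact exists_mid_of_dist_le_two H (hHconn (↑a : V) ↑b) hd
    obtain ⟨c, hc⟩ := hHelly (Subtype.val '' f i) (fun _ => 1) hpair
    refine ⟨c, ?_, fun v hv => hc ↑v ⟨v, hv, rfl⟩⟩
    intro hcs
    apply hns
    refine ⟨⟨c, hcs⟩, fun v hv hne => ?_⟩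
    have h1 : H.dist ↑v c ≤ 1 := hc ↑v ⟨v, hv, rfl⟩
    have h1' : G.dist v ⟨c, hcs⟩ ≤ 1 := by rw [hiso]; exact h1
    have hne' : G.dist v ⟨c, hcs⟩ ≠ 0 := fun h =>
      hne (((hGconn v ⟨c, hcs⟩).dist_eq_zero_iff).mp h)
    have : G.dist v ⟨c, hcs⟩ = 1 := le_antisymm h1' (Nat.one_le_iff_ne_zero.mpr hne')
    have := SimpleGraph.dist_eq_one_iff_adj.mp this
    exact this.symm
  choose c hcns hcd using key
  -- injectivity of c
  have hcinj : Function.Injective c := by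
    intro i j hij
    by_contra hne
    apply hne
    apply hfinj
    have htwoU : TwoSet G (f i ∪ f j) := by
      intro a ha b hb
      have hda : H.dist ↑a (c i) ≤ 1 := by
        rcases ha with h | h
        · exact hcd i a h
        · rw [hij]; exact hcd j a h
      have hdb : H.dist ↑b (c i) ≤ 1 := by
        rcases hb with h | h
        · exact hcd i b h
        · rw [hij]; exact hcd j b h
      rw [hiso]
      calc H.dist ↑a ↑b ≤ H.dist ↑a (c i) + H.dist (c i) ↑b :=
            hHconn.dist_triangle
        _ ≤ 1 + 1 := by
            have := SimpleGraph.dist_comm (G := H) (u := c i) (v := (↑b : V))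
            omega
        _ = 2 := rfl
    have hi := (hf i).1.2 (f i ∪ f j) htwoU Set.subset_union_left
    have hj := (hf j).1.2 (f i ∪ f j) htwoU Set.subset_union_right
    exact hi.symm.trans hj
  -- count
  have : k ≤ Nat.card (sᶜ : Set V) := by
    have : Function.Injective (fun i : Fin k => (⟨c i, hcns i⟩ : (sᶜ : Set V))) := by
      intro i j h
      exact hcinj (congrArg Subtype.val h)
    calc k = Nat.card (Fin k) := by simp
      _ ≤ Nat.card (sᶜ : Set V) := Nat.card_le_card_of_injective _ this
  rwa [Nat.card_coe_set_eq] at this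
end

section
/- For every positive integer k there exists a split graph G with exactly 6k vertices such that every Helly graph H having G as an isometric subgraph satisfies |V(H)| ≥ 2^k + 4k − 2. (Hence there are split graphs whose injective hull has at least 2^{n/6} + 2n/3 − 2 vertices, where n = |V(G)|.) -/
open SimpleGraph

/-- A split graph: the vertex set partitions into a clique and an independent set. -/
def IsSplit {V : Type*} (G : SimpleGraph V) : Prop :=
  ∃ C : Set V, G.IsClique C ∧ ∀ a ∉ C, ∀ b ∉ C, ¬ G.Adj a b

namespace SplitHullAux

/-! ### Generic distance helpers -/

variable {V : Type*} {G : SimpleGraph V}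

lemma two_le_dist (hconn : G.Connected) {x y : V} (hne : x ≠ y) (hnadj : ¬ G.Adj x y) :
    2 ≤ G.dist x y := by
  have h0 : G.dist x y ≠ 0 := fun hc => hne (hconn.dist_eq_zero_iff.mp hc)
  have h1 : G.dist x y ≠ 1 := fun hc => hnadj (SimpleGraph.dist_eq_one_iff_adj.mp hc)
  omega

lemma three_le_dist (hconn : G.Connected) {x y : V} (hne : x ≠ y) (hnadj : ¬ G.Adj x y)
    (hmid : ∀ z, ¬ (G.Adj x z ∧ G.Adj z y)) : 3 ≤ G.dist x y := by
  by_contra hcon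
  push_neg at hcon
  obtain ⟨p, hp⟩ := hconn.exists_walk_length_eq_dist x y
  rw [← hp] at hcon
  cases p with
  | nil => exact hne rfl
  | cons h q =>
    cases q with
    | nil => exact hnadj h
    | cons h' q' =>
      cases q' with
      | nil => exact hmid _ ⟨h, h'⟩
      | cons h'' q'' => simp [SimpleGraph.Walk.length_cons] at hcon; omega

lemma adj_dist_le_one {x y : V} (h : G.Adj x y) : G.dist x y ≤ 1 :=
  le_of_eq (SimpleGraph.dist_eq_one_iff_adj.mpr h)

lemma iso_dist_le {V' : Type*} {G' : SimpleGraph V'} (e : G ≃g G') (u v : V) :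
    G'.dist (e u) (e v) ≤ G.dist u v := by
  by_cases h : G.Reachable u v
  · obtain ⟨p, hp⟩ := h.exists_walk_length_eq_dist
    calc G'.dist (e u) (e v) ≤ (p.map e.toHom).length := SimpleGraph.dist_le _
      _ = G.dist u v := by rw [SimpleGraph.Walk.length_map, hp]
  · have h' : ¬ G'.Reachable (e u) (e v) := fun hr => h (SimpleGraph.Iso.reachable_iff (φ := e).mp hr)
    rw [SimpleGraph.dist_eq_zero_iff_eq_or_not_reachable.2 (Or.inr h),
      SimpleGraph.dist_eq_zero_iff_eq_or_not_reachable.2 (Or.inr h')]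

lemma iso_dist_eq {V' : Type*} {G' : SimpleGraph V'} (e : G ≃g G') (u v : V) :
    G.dist u v = G'.dist (e u) (e v) := by
  refine le_antisymm ?_ (iso_dist_le e u v)
  have := iso_dist_le e.symm (e u) (e v)
  simpa using this

/-! ### The construction -/

/-- Vertex set: `2k` clique vertices, `2k` pendant pairs `u i ε`, `2k` extra pendants. -/
abbrev Vk (k : ℕ) := Fin (2*k) ⊕ ((Fin k × Bool) ⊕ Fin (2*k))

/-- Whether clique vertex `a` is adjacent to pendant `(i, ε)`. -/
def cnd (k : ℕ) (i : Fin k) (ε : Bool) (a : Fin (2*k)) : Prop :=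
  if ε then ¬ ((a : ℕ) = 0 ∨ (a : ℕ) = (i : ℕ) + 1)
  else ((a : ℕ) = 0 ∨ (a : ℕ) = (i : ℕ) + 1)

def gAdj (k : ℕ) : Vk k → Vk k → Prop
  | .inl a, .inl b => a ≠ b
  | .inl a, .inr (.inl p) => cnd k p.1 p.2 a
  | .inr (.inl p), .inl a => cnd k p.1 p.2 a
  | .inl a, .inr (.inr b) => (a : ℕ) = (b : ℕ)
  | .inr (.inr b), .inl a => (a : ℕ) = (b : ℕ)
  | _, _ => False

def Gk (k : ℕ) : SimpleGraph (Vk k) where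
  Adj := gAdj k
  symm := by
    constructor
    rintro (a | p | b) (a' | p' | b') h <;>
      first
        | exact h.elim
        | exact h
        | exact Ne.symm h
  loopless := by
    constructor
    rintro (a | p | b) h
    · exact h rfl
    · exact h
    · exact h

@[simp] lemma adj_cc {k : ℕ} (a b : Fin (2*k)) :
    (Gk k).Adj (.inl a) (.inl b) ↔ a ≠ b := Iff.rfl
@[simp] lemma adj_cu {k : ℕ} (a : Fin (2*k)) (i : Fin k) (ε : Bool) :
    (Gk k).Adj (.inl a) (.inr (.inl (i, ε))) ↔ cnd k i ε a := Iff.rfl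
@[simp] lemma adj_uc {k : ℕ} (a : Fin (2*k)) (i : Fin k) (ε : Bool) :
    (Gk k).Adj (.inr (.inl (i, ε))) (.inl a) ↔ cnd k i ε a := Iff.rfl
@[simp] lemma adj_cw {k : ℕ} (a b : Fin (2*k)) :
    (Gk k).Adj (.inl a) (.inr (.inr b)) ↔ (a : ℕ) = (b : ℕ) := Iff.rfl
@[simp] lemma adj_wc {k : ℕ} (a b : Fin (2*k)) :
    (Gk k).Adj (.inr (.inr b)) (.inl a) ↔ (a : ℕ) = (b : ℕ) := Iff.rfl
@[simp] lemma adj_uu {k : ℕ} (p q : Fin k × Bool) :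
    (Gk k).Adj (.inr (.inl p)) (.inr (.inl q)) ↔ False := Iff.rfl
@[simp] lemma adj_uw {k : ℕ} (p : Fin k × Bool) (b : Fin (2*k)) :
    (Gk k).Adj (.inr (.inl p)) (.inr (.inr b)) ↔ False := Iff.rfl
@[simp] lemma adj_wu {k : ℕ} (p : Fin k × Bool) (b : Fin (2*k)) :
    (Gk k).Adj (.inr (.inr b)) (.inr (.inl p)) ↔ False := Iff.rfl
@[simp] lemma adj_ww {k : ℕ} (b b' : Fin (2*k)) :
    (Gk k).Adj (.inr (.inr b)) (.inr (.inr b')) ↔ False := Iff.rfl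

variable {k : ℕ}

lemma gk_connected (hk : 2 ≤ k) : (Gk k).Connected := by
  have h2k : 0 < 2*k := by omega
  have key : ∀ x : Vk k, (Gk k).Reachable x (.inl ⟨0, h2k⟩) := by
    have creach : ∀ a : Fin (2*k), (Gk k).Reachable (.inl a) (.inl ⟨0, h2k⟩) := by
      intro a
      by_cases h : a = ⟨0, h2k⟩
      · rw [h]
      · exact SimpleGraph.Adj.reachable ((adj_cc a _).mpr h)
    rintro (a | ⟨i, ε⟩ | b)
    · exact creach a
    · cases ε with
      | false =>
        refine SimpleGraph.Adj.reachable ?_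
        rw [adj_uc]; unfold cnd; simp
      | true =>
        refine SimpleGraph.Reachable.trans (SimpleGraph.Adj.reachable
          (v := (.inl ⟨k+1, by omega⟩ : Vk k)) ?_) (creach _)
        rw [adj_uc]; unfold cnd
        simp only [if_true]
        have : (i : ℕ) < k := i.2
        omega
    · refine SimpleGraph.Reachable.trans (SimpleGraph.Adj.reachable
        (v := (.inl ⟨(b : ℕ), b.2⟩ : Vk k)) ?_) (creach _)
      rw [adj_wc]
  rw [connected_iff]
  exact ⟨fun x y => (key x).trans (key y).symm, ⟨.inl ⟨0, h2k⟩⟩⟩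

lemma gk_split : IsSplit (Gk k) := by
  refine ⟨Set.range Sum.inl, ?_, ?_⟩
  · rintro x ⟨a, rfl⟩ y ⟨b, rfl⟩ hxy
    exact (adj_cc a b).mpr (fun h => hxy (congrArg Sum.inl h))
  · rintro (a | p | b) ha (a' | p' | b') hb h
    · exact ha ⟨a, rfl⟩
    · exact ha ⟨a, rfl⟩
    · exact ha ⟨a, rfl⟩
    · exact hb ⟨a', rfl⟩
    · exact h
    · exact h
    · exact hb ⟨a', rfl⟩
    · exact h
    · exact h

/-- pendant `u i ε` -/
abbrev uu (k : ℕ) (i : Fin k) (ε : Bool) : Vk k := .inr (.inl (i, ε))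
/-- pendant `w b` -/
abbrev ww (k : ℕ) (b : Fin (2*k)) : Vk k := .inr (.inr b)

lemma dist_u_opp (hk : 2 ≤ k) (i : Fin k) :
    3 ≤ (Gk k).dist (uu k i false) (uu k i true) := by
  refine three_le_dist (gk_connected hk) ?_ (by simp) ?_
  · intro h
    simp [uu] at h
  · rintro (a | p | b) ⟨h1, h2⟩
    · rw [adj_uc] at h1
      rw [adj_cu] at h2
      unfold cnd at h1 h2
      simp only [if_true, if_false] at h1 h2
      exact h2 h1
    · exact (adj_uu _ _).mp h2
    · exact (adj_uw _ _).mp h1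

lemma dist_pendants (hk : 2 ≤ k) {x y : Vk k}
    (hx : ∃ p, x = Sum.inr p) (hy : ∃ p, y = Sum.inr p) (hne : x ≠ y) :
    2 ≤ (Gk k).dist x y := by
  obtain ⟨p, rfl⟩ := hx
  obtain ⟨q, rfl⟩ := hy
  refine two_le_dist (gk_connected hk) hne ?_
  rcases p with p | b <;> rcases q with q | b' <;> simp

lemma common_nbr (hk : 2 ≤ k) (i j : Fin k) (hij : i ≠ j) (ε δ : Bool) :
    ∃ a : Fin (2*k), (Gk k).Adj (uu k i ε) (.inl a) ∧ (Gk k).Adj (uu k j δ) (.inl a) := by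
  have hi : (i : ℕ) < k := i.2
  have hj : (j : ℕ) < k := j.2
  have hijv : (i : ℕ) ≠ (j : ℕ) := fun h => hij (Fin.ext h)
  cases ε <;> cases δ
  · exact ⟨⟨0, by omega⟩, by rw [adj_uc]; unfold cnd; simp,
      by rw [adj_uc]; unfold cnd; simp⟩
  · refine ⟨⟨(i : ℕ) + 1, by omega⟩, ?_, ?_⟩
    · rw [adj_uc]; unfold cnd; simp
    · rw [adj_uc]; unfold cnd; simp only [if_true]; omega
  · refine ⟨⟨(j : ℕ) + 1, by omega⟩, ?_, ?_⟩
    · rw [adj_uc]; unfold cnd; simp only [if_true]; omega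
    · rw [adj_uc]; unfold cnd; simp
  · refine ⟨⟨k + 1, by omega⟩, ?_, ?_⟩
    · rw [adj_uc]; unfold cnd; simp only [if_true]; omega
    · rw [adj_uc]; unfold cnd; simp only [if_true]; omega

/-! ### The main counting argument -/

theorem main_aux (k : ℕ) (hk : 2 ≤ k) (W : Type) [Fintype W] (H : SimpleGraph W)
    (φ : Vk k → W)
    (hinj : Function.Injective φ)
    (hadj : ∀ a b, (Gk k).Adj a b → H.Adj (φ a) (φ b))
    (hdist : ∀ a b, (Gk k).dist a b = H.dist (φ a) (φ b))
    (hHconn : H.Connected) (hHelly : HellyGraph H) :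
    2 ^ k + 4 * k ≤ Fintype.card W := by
  have hGconn := gk_connected hk
  -- Helly centers
  have hex : ∀ σ : Fin k → Bool, ∃ c : W, ∀ i : Fin k, H.dist (φ (uu k i (σ i))) c ≤ 1 := by
    intro σ
    have hpair : ∀ x ∈ Set.range (fun i => φ (uu k i (σ i))),
        ∀ y ∈ Set.range (fun i => φ (uu k i (σ i))),
        ∃ w, H.dist x w ≤ (fun _ => 1) x ∧ H.dist y w ≤ (fun _ => 1) y := by
      rintro x ⟨i, rfl⟩ y ⟨j, rfl⟩
      by_cases hij : i = j
      · subst hij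
        refine ⟨φ (uu k i (σ i)), ?_, ?_⟩ <;> simp [SimpleGraph.dist_self]
      · obtain ⟨a, h1, h2⟩ := common_nbr hk i j hij (σ i) (σ j)
        refine ⟨φ (.inl a), ?_, ?_⟩
        · rw [← hdist]
          exact adj_dist_le_one h1
        · rw [← hdist]
          exact adj_dist_le_one h2
    obtain ⟨c, hc⟩ := hHelly (Set.range fun i => φ (uu k i (σ i))) (fun _ => 1) hpair
    exact ⟨c, fun i => hc _ ⟨i, rfl⟩⟩
  choose m hm using hex
  -- distinctness of centers
  have m_inj : Function.Injective m := by
    intro σ τ h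
    by_contra hne
    obtain ⟨i, hi⟩ : ∃ i, σ i ≠ τ i := by
      by_contra h'
      push_neg at h'
      exact hne (funext h')
    have h3 : 3 ≤ (Gk k).dist (uu k i (σ i)) (uu k i (τ i)) := by
      rcases Bool.eq_false_or_eq_true (σ i) with hσ | hσ <;>
        rcases Bool.eq_false_or_eq_true (τ i) with hτ | hτ
      · rw [hσ, hτ] at hi; exact absurd rfl hi
      · rw [hσ, hτ, SimpleGraph.dist_comm]; exact dist_u_opp hk i
      · rw [hσ, hτ]; exact dist_u_opp hk i
      · rw [hσ, hτ] at hi; exact absurd rfl hi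
    have h2 : (Gk k).dist (uu k i (σ i)) (uu k i (τ i)) ≤ 2 := by
      rw [hdist]
      calc H.dist (φ (uu k i (σ i))) (φ (uu k i (τ i)))
          ≤ H.dist (φ (uu k i (σ i))) (m σ) + H.dist (m σ) (φ (uu k i (τ i))) :=
            hHconn.dist_triangle
        _ ≤ 1 + 1 := by
            refine add_le_add (hm σ i) ?_
            rw [h, SimpleGraph.dist_comm]
            exact hm τ i
    omega
  -- centers differ from pendant images
  have m_ne_u : ∀ σ (i : Fin k) (ε : Bool), m σ ≠ φ (uu k i ε) := by
    intro σ i ε heq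
    by_cases hε : ε = σ i
    · obtain ⟨j, hj⟩ : ∃ j : Fin k, j ≠ i := by
        rcases Decidable.eq_or_ne i ⟨0, by omega⟩ with h | h
        · exact ⟨⟨1, by omega⟩, by rw [h]; intro hc; simpa using congrArg Fin.val hc⟩
        · exact ⟨⟨0, by omega⟩, fun hc => h (hc ▸ rfl)⟩
      have h2 : 2 ≤ (Gk k).dist (uu k j (σ j)) (uu k i ε) := by
        refine dist_pendants hk ⟨_, rfl⟩ ⟨_, rfl⟩ ?_
        intro hc
        simp only [uu, Sum.inr.injEq, Sum.inl.injEq, Prod.mk.injEq] at hc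
        exact hj hc.1
      have h1 : (Gk k).dist (uu k j (σ j)) (uu k i ε) ≤ 1 := by
        rw [hdist, ← heq]
        exact hm σ j
      omega
    · have h2 : 2 ≤ (Gk k).dist (uu k i (σ i)) (uu k i ε) := by
        refine dist_pendants hk ⟨_, rfl⟩ ⟨_, rfl⟩ ?_
        intro hc
        simp only [uu, Sum.inr.injEq, Sum.inl.injEq, Prod.mk.injEq] at hc
        exact hε hc.2.symm
      have h1 : (Gk k).dist (uu k i (σ i)) (uu k i ε) ≤ 1 := by
        rw [hdist, ← heq]
        exact hm σ i
      omega
  have m_ne_w : ∀ σ (b : Fin (2*k)), m σ ≠ φ (ww k b) := by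
    intro σ b heq
    have h2 : 2 ≤ (Gk k).dist (uu k ⟨0, by omega⟩ (σ ⟨0, by omega⟩)) (ww k b) :=
      dist_pendants hk ⟨_, rfl⟩ ⟨_, rfl⟩ (by simp [uu, ww])
    have h1 : (Gk k).dist (uu k ⟨0, by omega⟩ (σ ⟨0, by omega⟩)) (ww k b) ≤ 1 := by
      rw [hdist, ← heq]
      exact hm σ _
    omega
  -- the injection
  let F : ((Fin k → Bool) ⊕ ((Fin k × Bool) ⊕ Fin (2*k))) → W := fun x =>
    match x with
    | .inl σ => m σ
    | .inr y => φ (.inr y)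
  have hF : Function.Injective F := by
    rintro (σ | y) (τ | z) h
    · exact congrArg Sum.inl (m_inj h)
    · exfalso
      rcases z with ⟨i, ε⟩ | b
      · exact m_ne_u σ i ε h
      · exact m_ne_w σ b h
    · exfalso
      rcases y with ⟨i, ε⟩ | b
      · exact m_ne_u τ i ε h.symm
      · exact m_ne_w τ b h.symm
    · exact congrArg Sum.inr (Sum.inr_injective (hinj h))
  have hcard := Fintype.card_le_of_injective F hF
  have hdom : Fintype.card ((Fin k → Bool) ⊕ ((Fin k × Bool) ⊕ Fin (2*k))) = 2^k + 4*k := by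
    simp [Fintype.card_sum, Fintype.card_prod, Fintype.card_fun]
    ring
  omega

end SplitHullAux

open SplitHullAux in
/-- For every `k ≥ 1` there is a split graph on `6k` vertices such that every Helly graph
containing it as an isometric subgraph has at least `2^k + 4k - 2` vertices. -/
theorem split_graph_exponential_injective_hull (k : ℕ) (hk : 0 < k) :
    ∃ G : SimpleGraph (Fin (6 * k)), G.Connected ∧ IsSplit G ∧
      ∀ (W : Type) [Fintype W] (H : SimpleGraph W) (φ : Fin (6 * k) → W),
        Function.Injective φ →
        (∀ a b, G.Adj a b → H.Adj (φ a) (φ b)) →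
        (∀ a b, G.dist a b = H.dist (φ a) (φ b)) →
        H.Connected → HellyGraph H →
        2 ^ k + 4 * k - 2 ≤ Fintype.card W := by
  by_cases hk1 : k = 1
  · subst hk1
    refine ⟨⊤, ?_, ?_, ?_⟩
    · rw [connected_iff]
      refine ⟨fun x y => ?_, ⟨0, by omega⟩⟩
      by_cases h : x = y
      · rw [h]
      · exact SimpleGraph.Adj.reachable h
    · exact ⟨Set.univ, fun x _ y _ hxy => hxy, fun a ha => absurd (Set.mem_univ a) ha⟩
    · intro W _ H φ hinj _ _ _ _
      have := Fintype.card_le_of_injective φ hinj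
      simp only [Fintype.card_fin] at this
      omega
  · have hk2 : 2 ≤ k := by omega
    have hcardV : Fintype.card (Vk k) = 6 * k := by
      simp [Fintype.card_sum, Fintype.card_prod]
      ring
    let e : Vk k ≃ Fin (6 * k) := Fintype.equivFinOfCardEq hcardV
    let G : SimpleGraph (Fin (6 * k)) := (Gk k).comap (e.symm.toEmbedding : Fin (6*k) → Vk k)
    have hGadj : ∀ x y, G.Adj x y ↔ (Gk k).Adj (e.symm x) (e.symm y) := fun _ _ => Iff.rfl
    let ι : G ≃g Gk k := SimpleGraph.Iso.comap e.symm (Gk k)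
    have hι : ∀ x, ι x = e.symm x := fun _ => rfl
    refine ⟨G, ?_, ?_, ?_⟩
    · exact ι.connected_iff.mpr (gk_connected hk2)
    · obtain ⟨C, hC1, hC2⟩ := (gk_split : IsSplit (Gk k))
      refine ⟨{x | e.symm x ∈ C}, ?_, ?_⟩
      · intro x hx y hy hxy
        exact hC1 hx hy (fun h => hxy (e.symm.injective h))
      · intro a ha b hb
        exact hC2 _ ha _ hb
    · intro W _ H φ hinj hadj hdist hHconn hHelly
      have hψdist : ∀ a b : Vk k, (Gk k).dist a b = G.dist (e a) (e b) := by
        intro a b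
        have h1 := iso_dist_eq ι (e a) (e b)
        rw [hι, hι] at h1
        simp only [Equiv.symm_apply_apply] at h1
        exact h1.symm
      have key := main_aux k hk2 W H (fun a => φ (e a))
        (fun a b hab => e.injective (hinj hab))
        ?_ ?_ hHconn hHelly
      · omega
      · intro a b hab
        refine hadj (e a) (e b) ?_
        rw [hGadj]
        simpa using hab
      · intro a b
        rw [hψdist a b, hdist (e a) (e b)]
end

section
/- For every positive integer k there exists a cocomparability graph G with exactly 6k vertices such that every Helly graph H having G as an isometric subgraph satisfies |V(H)| ≥ 2^k + 4k − 2. (Hence there are cocomparability graphs whose injective hull has at least 2^{n/6} + 2n/3 − 2 vertices, where n = |V(G)|.) -/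
open SimpleGraph

/-- A cocomparability graph: there is a linear ordering of the vertices such that whenever
`x < y < z` and `xz` is an edge, `xy` or `yz` is an edge. -/
def IsCocomparability {V : Type*} (G : SimpleGraph V) : Prop :=
  ∃ f : V → ℕ, Function.Injective f ∧
    ∀ x y z : V, f x < f y → f y < f z → G.Adj x z → G.Adj x y ∨ G.Adj y z

/-- The core graph on `Fin 6 × Fin k`. -/
def Gcore (k : ℕ) : SimpleGraph (Fin 6 × Fin k) where
  Adj x y := (x.1 = y.1 ∧ x.2 ≠ y.2)
    ∨ (x.1.val + y.1.val = 1 ∧ x.2 ≠ y.2)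
    ∨ ((x.1.val = y.1.val + 1 ∨ y.1.val = x.1.val + 1) ∧ 1 ≤ x.1.val ∧ 1 ≤ y.1.val ∧ x.2 = y.2)
  symm := by
    constructor
    rintro x y (⟨h1, h2⟩ | ⟨h1, h2⟩ | ⟨h1, h2, h3, h4⟩)
    · exact Or.inl ⟨h1.symm, h2.symm⟩
    · exact Or.inr (Or.inl ⟨by omega, h2.symm⟩)
    · exact Or.inr (Or.inr ⟨h1.symm, h3, h2, h4.symm⟩)
  loopless := by
    constructor
    rintro x (⟨h1, h2⟩ | ⟨h1, h2⟩ | ⟨h1, h2, h3, h4⟩)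
    · exact h2 rfl
    · omega
    · omega

lemma gcore_adj_col {k : ℕ} (s : Fin 6) {i j : Fin k} (h : i ≠ j) :
    (Gcore k).Adj (s, i) (s, j) := Or.inl ⟨rfl, h⟩

lemma gcore_adj01 {k : ℕ} {i j : Fin k} (h : i ≠ j) :
    (Gcore k).Adj (0, i) (1, j) := Or.inr (Or.inl ⟨rfl, h⟩)

lemma gcore_adj_up {k : ℕ} {s t : Fin 6} (hst : t.val = s.val + 1) (hs : 1 ≤ s.val)
    (i : Fin k) : (Gcore k).Adj (s, i) (t, i) := by
  have h1 : (1:ℕ) ≤ t.val := by omega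
  exact Or.inr (Or.inr ⟨Or.inr hst, hs, h1, rfl⟩)

/-- The climbing walk `(1,j) → (2,j) → (3,j) → (4,j) → (5,j)`. -/
def climb {k : ℕ} (j : Fin k) : (Gcore k).Walk (1, j) (5, j) :=
  Walk.cons (gcore_adj_up (s := 1) (t := 2) (by decide) (by decide) j)
    (Walk.cons (gcore_adj_up (s := 2) (t := 3) (by decide) (by decide) j)
      (Walk.cons (gcore_adj_up (s := 3) (t := 4) (by decide) (by decide) j)
        (Walk.cons (gcore_adj_up (s := 4) (t := 5) (by decide) (by decide) j) Walk.nil)))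

lemma climb_length {k : ℕ} (j : Fin k) : (climb j).length = 4 := rfl

section Dists
variable {k : ℕ}

lemma dU_col (s : Fin 6) (i j : Fin k) (h : i ≠ j) :
    (Gcore k).dist (s, i) (s, j) ≤ 1 :=
  dist_le (Walk.cons (gcore_adj_col s h) Walk.nil)

lemma dU3 {i j : Fin k} (h : i ≠ j) : (Gcore k).dist (0, i) (1, j) ≤ 1 :=
  dist_le (Walk.cons (gcore_adj01 h) Walk.nil)

lemma dU4 (j : Fin k) : (Gcore k).dist (5, j) (1, j) ≤ 4 := by
  have := dist_le (climb j).reverse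
  simpa [Walk.length_reverse, climb_length] using this

lemma dU5 (i j : Fin k) : (Gcore k).dist (5, i) (1, j) ≤ 5 := by
  by_cases h : i = j
  · subst h; exact le_trans (dU4 i) (by norm_num)
  · refine le_trans (dist_le (Walk.cons (gcore_adj_col 5 h) (climb j).reverse)) ?_
    simp [Walk.length_reverse, climb_length]

lemma dU6 (hk : 2 ≤ k) (i : Fin k) : (Gcore k).dist (0, i) (1, i) ≤ 2 := by
  have : Nontrivial (Fin k) := Fin.nontrivial_iff_two_le.mpr hk
  obtain ⟨m, hm⟩ := exists_ne i
  refine le_trans (dist_le (Walk.cons (gcore_adj_col 0 (Ne.symm hm))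
      (Walk.cons (gcore_adj01 hm) Walk.nil))) ?_
  simp

/-- Lower-bound potential centered at `a_i = (0,i)`. -/
def Lfun (i : Fin k) (x : Fin 6 × Fin k) : ℕ :=
  if x.1.val = 0 then (if x.2 = i then 0 else 1)
  else x.1.val + (if x.2 = i then 1 else 0)

lemma Lfun_step (i : Fin k) {x y : Fin 6 × Fin k} (h : (Gcore k).Adj x y) :
    Lfun i y ≤ Lfun i x + 1 := by
  obtain ⟨s, a⟩ := x
  obtain ⟨t, b⟩ := y
  have hs6 : s.val < 6 := s.isLt
  have ht6 : t.val < 6 := t.isLt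
  unfold Lfun
  dsimp only
  rcases h with ⟨h1, h2⟩ | ⟨h1, h2⟩ | ⟨h1, h2, h3, h4⟩
  · have hst : s.val = t.val := congrArg Fin.val h1
    have h2' : a ≠ b := h2
    by_cases ha : a = i <;> by_cases hb : b = i
    · exact absurd (ha.trans hb.symm) h2'
    all_goals simp only [ha, hb, if_true, if_false] <;> split_ifs <;> omega
  · have h1' : s.val + t.val = 1 := h1
    have h2' : a ≠ b := h2
    by_cases ha : a = i <;> by_cases hb : b = i
    · exact absurd (ha.trans hb.symm) h2'
    all_goals simp only [ha, hb, if_true, if_false] <;> split_ifs <;> omega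
  · have h1' : s.val = t.val + 1 ∨ t.val = s.val + 1 := h1
    have h2' : 1 ≤ s.val := h2
    have h3' : 1 ≤ t.val := h3
    have h4' : a = b := h4
    subst h4'
    by_cases ha : a = i
    all_goals simp only [ha, if_true, if_false] <;> split_ifs <;> omega

lemma Lfun_walk (i : Fin k) {u v : Fin 6 × Fin k} (p : (Gcore k).Walk u v) :
    Lfun i v ≤ Lfun i u + p.length := by
  induction p with
  | nil => simp
  | cons h q ih =>
      have h1 := Lfun_step i h
      simp only [Walk.length_cons]
      omega

lemma dist_lower (i : Fin k) (v : Fin 6 × Fin k)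
    (hr : (Gcore k).Reachable (0, i) v) :
    Lfun i v ≤ (Gcore k).dist (0, i) v := by
  obtain ⟨p, hp⟩ := hr.exists_walk_length_eq_dist
  have := Lfun_walk i p
  have h0 : Lfun i (0, i) = 0 := by simp [Lfun]
  omega

/-- Reach `(1, l)` from any vertex. -/
lemma reach_to_one (hk : 2 ≤ k) (s : Fin 6) (l : Fin k) :
    (Gcore k).Reachable (s, l) (1, l) := by
  have : Nontrivial (Fin k) := Fin.nontrivial_iff_two_le.mpr hk
  obtain ⟨m, hm⟩ := exists_ne l
  fin_cases s
  · exact Walk.reachable (Walk.cons (gcore_adj_col 0 (Ne.symm hm))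
      (Walk.cons (gcore_adj01 hm) Walk.nil))
  · rfl
  · exact ((gcore_adj_up (s := 1) (t := 2) (by decide) (by decide) l).reachable).symm
  · exact Walk.reachable
      (Walk.cons (gcore_adj_up (s := 2) (t := 3) (by decide) (by decide) l).symm
        (Walk.cons (gcore_adj_up (s := 1) (t := 2) (by decide) (by decide) l).symm Walk.nil))
  · exact Walk.reachable
      (Walk.cons (gcore_adj_up (s := 3) (t := 4) (by decide) (by decide) l).symm
        (Walk.cons (gcore_adj_up (s := 2) (t := 3) (by decide) (by decide) l).symm
          (Walk.cons (gcore_adj_up (s := 1) (t := 2) (by decide) (by decide) l).symm Walk.nil)))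
  · exact Walk.reachable ((climb l).reverse)

lemma gcore_connected (hk : 2 ≤ k) : (Gcore k).Connected := by
  have hne : Nonempty (Fin 6 × Fin k) := ⟨(0, ⟨0, by omega⟩)⟩
  refine ⟨fun u v => ?_⟩
  obtain ⟨su, iu⟩ := u
  obtain ⟨sv, iv⟩ := v
  refine (reach_to_one hk su iu).trans (Reachable.trans ?_ (reach_to_one hk sv iv).symm)
  by_cases h : iu = iv
  · rw [h]
  · exact (gcore_adj_col 1 h).reachable

lemma mul_add_lt_mul_add {p q x y : ℕ} (hx : x < k) (hpq : p < q) :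
    p * k + x < q * k + y :=
  calc p * k + x < p * k + k := by omega
    _ = (p + 1) * k := by ring
    _ ≤ q * k := Nat.mul_le_mul_right k hpq
    _ ≤ q * k + y := Nat.le_add_right _ _

lemma gcore_cocomp : ∃ f : Fin 6 × Fin k → ℕ, Function.Injective f ∧
    ∀ x y z, f x < f y → f y < f z → (Gcore k).Adj x z →
      (Gcore k).Adj x y ∨ (Gcore k).Adj y z := by
  refine ⟨fun x => x.1.val * k + x.2.val, ?_, ?_⟩
  · rintro ⟨s, a⟩ ⟨t, b⟩ h
    dsimp only at h
    have ha : a.val < k := a.isLt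
    have hb : b.val < k := b.isLt
    have hst : s.val = t.val := by
      rcases Nat.lt_trichotomy s.val t.val with hlt | heq | hgt
      · exact absurd h (Nat.ne_of_lt (mul_add_lt_mul_add ha hlt))
      · exact heq
      · exact absurd h.symm (Nat.ne_of_lt (mul_add_lt_mul_add hb hgt))
    have h2 : t.val * k + a.val = t.val * k + b.val := by rw [hst] at h; exact h
    exact Prod.ext (Fin.ext hst) (Fin.ext (Nat.add_left_cancel h2))
  · rintro ⟨s, a⟩ ⟨t, b⟩ ⟨u, c⟩ hxy hyz hadj
    dsimp only at hxy hyz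
    have ha : a.val < k := a.isLt
    have hb : b.val < k := b.isLt
    have hc : c.val < k := c.isLt
    have hst : s.val ≤ t.val := by
      by_contra hcon
      push_neg at hcon
      have := mul_add_lt_mul_add (k := k) (y := a.val) hb hcon
      omega
    have htu : t.val ≤ u.val := by
      by_contra hcon
      push_neg at hcon
      have := mul_add_lt_mul_add (k := k) (y := b.val) hc hcon
      omega
    have hsu : u.val ≤ s.val + 1 := by
      rcases hadj with ⟨h1, _⟩ | ⟨h1, _⟩ | ⟨h1, _, _, _⟩
      · have : s.val = u.val := congrArg Fin.val h1
        omega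
      · have h1' : s.val + u.val = 1 := h1
        omega
      · have h1' : s.val = u.val + 1 ∨ u.val = s.val + 1 := h1
        omega
    rcases eq_or_lt_of_le hst with he | hlt
    · left
      refine Or.inl ⟨Fin.ext he, fun hab => ?_⟩
      have hab' : a = b := hab
      rw [he, hab'] at hxy
      exact lt_irrefl _ hxy
    · rcases eq_or_lt_of_le htu with he2 | hlt2
      · right
        refine Or.inl ⟨Fin.ext he2, fun hbc => ?_⟩
        have hbc' : b = c := hbc
        rw [he2, hbc'] at hyz
        exact lt_irrefl _ hyz
      · omega

end Dists

theorem iso_dist {V V' : Type*} {G : SimpleGraph V} {G' : SimpleGraph V'}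
    (ψ : G ≃g G') (u v : V) : G'.dist (ψ u) (ψ v) = G.dist u v := by
  refine le_antisymm ?_ ?_
  · by_cases h : G.Reachable u v
    · obtain ⟨p, hp⟩ := h.exists_walk_length_eq_dist
      calc G'.dist (ψ u) (ψ v) ≤ (p.map ψ.toHom).length := dist_le _
        _ = G.dist u v := by rw [Walk.length_map, hp]
    · have h' : ¬G'.Reachable (ψ u) (ψ v) := by
        rwa [Iso.reachable_iff (φ := ψ)]
      rw [dist_eq_zero_of_not_reachable h']
      exact Nat.zero_le _
  · by_cases h : G'.Reachable (ψ u) (ψ v)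
    · obtain ⟨p, hp⟩ := h.exists_walk_length_eq_dist
      have hd := dist_le (p.map ψ.symm.toHom)
      rw [Walk.length_map, hp] at hd
      simpa using hd
    · have h' : ¬G.Reachable u v := fun hr => h (hr.map ψ.toHom)
      rw [dist_eq_zero_of_not_reachable h']
      exact Nat.zero_le _

/-- column map avoiding column 1 -/
def colmap (t : Fin 5) : Fin 6 :=
  if t.val = 0 then 0 else ⟨t.val + 1, by omega⟩

lemma colmap_ne_one (t : Fin 5) : (colmap t).val ≠ 1 := by
  unfold colmap; split_ifs <;> simp <;> omega

lemma colmap_inj : Function.Injective colmap := by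
  intro a b h
  have hv := congrArg Fin.val h
  unfold colmap at hv
  apply Fin.ext
  split_ifs at hv <;> simp at hv <;> omega

open scoped Classical in
noncomputable def radFun {k : ℕ} {W : Type} (Φ : Fin 6 × Fin k → W) (A : Finset (Fin k))
    (w : W) : ℕ :=
  if h : ∃ i : Fin k, w = Φ (0, i) then (if h.choose ∈ A then 2 else 1)
  else if h : ∃ i : Fin k, w = Φ (5, i) then (if h.choose ∈ A then 4 else 5)
  else 0

lemma radFun_a {k : ℕ} {W : Type} {Φ : Fin 6 × Fin k → W} (hinj : Function.Injective Φ)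
    (A : Finset (Fin k)) (i : Fin k) :
    radFun Φ A (Φ (0, i)) = if i ∈ A then 2 else 1 := by
  classical
  have hex : ∃ i' : Fin k, Φ (0, i) = Φ (0, i') := ⟨i, rfl⟩
  rw [radFun, dif_pos hex]
  have hch : hex.choose = i := by
    have hsp := hex.choose_spec
    have h2 := hinj hsp
    exact (congrArg Prod.snd h2).symm
  rw [hch]

lemma radFun_b {k : ℕ} {W : Type} {Φ : Fin 6 × Fin k → W} (hinj : Function.Injective Φ)
    (A : Finset (Fin k)) (i : Fin k) :
    radFun Φ A (Φ (5, i)) = if i ∈ A then 4 else 5 := by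
  classical
  have hnex : ¬∃ i' : Fin k, Φ (5, i) = Φ (0, i') := by
    rintro ⟨i', hi'⟩
    have h2 := hinj hi'
    have h3 := congrArg (fun p => p.1.val) h2
    have h4 : (5 : ℕ) = 0 := h3
    omega
  have hex : ∃ i' : Fin k, Φ (5, i) = Φ (5, i') := ⟨i, rfl⟩
  rw [radFun, dif_neg hnex, dif_pos hex]
  have hch : hex.choose = i := by
    have hsp := hex.choose_spec
    have h2 := hinj hsp
    exact (congrArg Prod.snd h2).symm
  rw [hch]

theorem main_ge2 (k : ℕ) (hk2 : 2 ≤ k) :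
    ∃ G : SimpleGraph (Fin (6 * k)), G.Connected ∧ IsCocomparability G ∧
      ∀ (W : Type) [Fintype W] (H : SimpleGraph W) (φ : Fin (6 * k) → W),
        Function.Injective φ →
        (∀ a b, G.Adj a b → H.Adj (φ a) (φ b)) →
        (∀ a b, G.dist a b = H.dist (φ a) (φ b)) →
        H.Connected → HellyGraph H →
        2 ^ k + 4 * k - 2 ≤ Fintype.card W := by
  classical
  have hnt : Nontrivial (Fin k) := Fin.nontrivial_iff_two_le.mpr hk2
  set e : Fin 6 × Fin k ≃ Fin (6 * k) := finProdFinEquiv with he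
  set Gk : SimpleGraph (Fin (6 * k)) := (Gcore k).comap e.symm.toEmbedding with hGk
  let ψ : Gk ≃g Gcore k := Iso.comap e.symm (Gcore k)
  have hψ : ∀ x : Fin 6 × Fin k, ψ (e x) = x := fun x => e.symm_apply_apply x
  have hconnCore : (Gcore k).Connected := gcore_connected hk2
  refine ⟨Gk, ?_, ?_, ?_⟩
  · exact (Iso.connected_iff ψ).mpr hconnCore
  · obtain ⟨f, finj, fprop⟩ := gcore_cocomp (k := k)
    exact ⟨fun v => f (e.symm v), finj.comp e.symm.injective,
      fun x y z h1 h2 h3 => fprop _ _ _ h1 h2 h3⟩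
  · intro W _ H φ hinj hadj hdist hconn hHelly
    set Φ : Fin 6 × Fin k → W := fun x => φ (e x) with hΦ
    have hΦinj : Function.Injective Φ := fun x y h => e.injective (hinj h)
    have hΦdist : ∀ x y, H.dist (Φ x) (Φ y) = (Gcore k).dist x y := by
      intro x y
      have h2 := iso_dist ψ (e x) (e y)
      rw [hψ x, hψ y] at h2
      exact (hdist (e x) (e y)).symm.trans h2.symm
    have hcol0 : ∀ i j : Fin k, i ≠ j → H.dist (Φ (0, i)) (Φ (0, j)) ≤ 1 := by
      intro i j h; rw [hΦdist]; exact dU_col 0 i j h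
    have hcol5 : ∀ i j : Fin k, i ≠ j → H.dist (Φ (5, i)) (Φ (5, j)) ≤ 1 := by
      intro i j h; rw [hΦdist]; exact dU_col 5 i j h
    have h01 : ∀ i j : Fin k, i ≠ j → H.dist (Φ (0, i)) (Φ (1, j)) ≤ 1 := by
      intro i j h; rw [hΦdist]; exact dU3 h
    have h51 : ∀ i j : Fin k, H.dist (Φ (5, i)) (Φ (1, j)) ≤ 5 := by
      intro i j; rw [hΦdist]; exact dU5 i j
    have h51' : ∀ j : Fin k, H.dist (Φ (5, j)) (Φ (1, j)) ≤ 4 := by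
      intro j; rw [hΦdist]; exact dU4 j
    have h011 : ∀ i : Fin k, H.dist (Φ (0, i)) (Φ (1, i)) ≤ 2 := by
      intro i; rw [hΦdist]; exact dU6 hk2 i
    have hlow6 : ∀ i : Fin k, 6 ≤ H.dist (Φ (0, i)) (Φ (5, i)) := by
      intro i; rw [hΦdist]
      have h1 := dist_lower i (5, i) (hconnCore.preconnected _ _)
      have hL : Lfun i (5, i) = 6 := by
        unfold Lfun
        dsimp only
        rw [if_neg (by decide), if_pos rfl]
        decide
      omega
    have hlowS : ∀ (s : Fin 6) (j : Fin k), 2 ≤ s.val → 3 ≤ H.dist (Φ (0, j)) (Φ (s, j)) := by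
      intro s j hs; rw [hΦdist]
      have h1 := dist_lower j (s, j) (hconnCore.preconnected _ _)
      have hL : Lfun j (s, j) = s.val + 1 := by
        unfold Lfun
        dsimp only
        rw [if_neg (by omega), if_pos rfl]
      omega
    set S : Set W := {w | ∃ i : Fin k, w = Φ (0, i) ∨ w = Φ (5, i)} with hSdef
    have hSa : ∀ i : Fin k, Φ (0, i) ∈ S := fun i => ⟨i, Or.inl rfl⟩
    have hSb : ∀ i : Fin k, Φ (5, i) ∈ S := fun i => ⟨i, Or.inr rfl⟩
    have hrada := radFun_a hΦinj
    have hradb := radFun_b hΦinj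
    have hprem : ∀ A : Finset (Fin k), ∀ u ∈ S, ∀ v ∈ S,
        ∃ w, H.dist u w ≤ radFun Φ A u ∧ H.dist v w ≤ radFun Φ A v := by
      intro A u hu v hv
      rw [hSdef] at hu hv
      obtain ⟨i, hi⟩ := hu
      obtain ⟨j, hj⟩ := hv
      rcases hi with hi | hi <;> rcases hj with hj | hj <;> subst hi <;> subst hj
      · refine ⟨Φ (0, i), ?_, ?_⟩
        · rw [SimpleGraph.dist_self]; exact Nat.zero_le _
        · rw [hrada A j]
          have hb : H.dist (Φ (0, j)) (Φ (0, i)) ≤ 1 := by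
            by_cases h : j = i
            · subst h; rw [SimpleGraph.dist_self]; exact Nat.zero_le _
            · exact hcol0 j i h
          split_ifs <;> omega
      · by_cases hij : i = j
        · subst hij
          by_cases hiA : i ∈ A
          · refine ⟨Φ (1, i), ?_, ?_⟩
            · rw [hrada A i, if_pos hiA]; exact h011 i
            · rw [hradb A i, if_pos hiA]; exact h51' i
          · obtain ⟨m, hm⟩ := exists_ne i
            refine ⟨Φ (1, m), ?_, ?_⟩
            · rw [hrada A i, if_neg hiA]
              exact h01 i m (Ne.symm hm)
            · rw [hradb A i, if_neg hiA]; exact h51 i m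
        · refine ⟨Φ (1, j), ?_, ?_⟩
          · rw [hrada A i]
            have hb := h01 i j hij
            split_ifs <;> omega
          · rw [hradb A j]
            have hb := h51' j
            split_ifs <;> omega
      · by_cases hij : j = i
        · subst hij
          by_cases hiA : j ∈ A
          · refine ⟨Φ (1, j), ?_, ?_⟩
            · rw [hradb A j, if_pos hiA]; exact h51' j
            · rw [hrada A j, if_pos hiA]; exact h011 j
          · obtain ⟨m, hm⟩ := exists_ne j
            refine ⟨Φ (1, m), ?_, ?_⟩
            · rw [hradb A j, if_neg hiA]; exact h51 j m
            · rw [hrada A j, if_neg hiA]; exact h01 j m (Ne.symm hm)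
        · refine ⟨Φ (1, i), ?_, ?_⟩
          · rw [hradb A i]
            have hb := h51' i
            split_ifs <;> omega
          · rw [hrada A j]
            have hb := h01 j i hij
            split_ifs <;> omega
      · refine ⟨Φ (5, i), ?_, ?_⟩
        · rw [SimpleGraph.dist_self]; exact Nat.zero_le _
        · rw [hradb A j]
          have hb : H.dist (Φ (5, j)) (Φ (5, i)) ≤ 1 := by
            by_cases h : j = i
            · subst h; rw [SimpleGraph.dist_self]; exact Nat.zero_le _
            · exact hcol5 j i h
          split_ifs <;> omega
    have hcenter : ∀ A : Finset (Fin k), ∃ c, ∀ v ∈ S, H.dist v c ≤ radFun Φ A v :=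
      fun A => hHelly S (radFun Φ A) (hprem A)
    let FC : Finset (Fin k) → W := fun A => (hcenter A).choose
    have hFCa : ∀ (A : Finset (Fin k)) (i : Fin k),
        H.dist (Φ (0, i)) (FC A) ≤ if i ∈ A then 2 else 1 := by
      intro A i
      have h1 := (hcenter A).choose_spec (Φ (0, i)) (hSa i)
      rwa [hrada A i] at h1
    have hFCb : ∀ (A : Finset (Fin k)) (i : Fin k),
        H.dist (Φ (5, i)) (FC A) ≤ if i ∈ A then 4 else 5 := by
      intro A i
      have h1 := (hcenter A).choose_spec (Φ (5, i)) (hSb i)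
      rwa [hradb A i] at h1
    have hFCinj : Function.Injective FC := by
      intro A B hAB
      by_contra hne
      have hdiff : ∃ i, (i ∈ A ∧ i ∉ B) ∨ (i ∈ B ∧ i ∉ A) := by
        by_contra hcon
        push_neg at hcon
        exact hne (Finset.ext fun i => ⟨(hcon i).1, (hcon i).2⟩)
      obtain ⟨i, hi | hi⟩ := hdiff
      · have t1 : H.dist (Φ (5, i)) (FC A) ≤ 4 := by
          have h1 := hFCb A i; rwa [if_pos hi.1] at h1
        have t2 : H.dist (Φ (0, i)) (FC B) ≤ 1 := by
          have h1 := hFCa B i; rwa [if_neg hi.2] at h1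
        rw [← hAB] at t2
        have tri := hconn.dist_triangle (u := Φ (0, i)) (v := FC A) (w := Φ (5, i))
        have hcm : H.dist (FC A) (Φ (5, i)) = H.dist (Φ (5, i)) (FC A) :=
          SimpleGraph.dist_comm
        have hl := hlow6 i
        omega
      · have t1 : H.dist (Φ (5, i)) (FC B) ≤ 4 := by
          have h1 := hFCb B i; rwa [if_pos hi.1] at h1
        have t2 : H.dist (Φ (0, i)) (FC A) ≤ 1 := by
          have h1 := hFCa A i; rwa [if_neg hi.2] at h1
        rw [hAB] at t2
        have tri := hconn.dist_triangle (u := Φ (0, i)) (v := FC B) (w := Φ (5, i))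
        have hcm : H.dist (FC B) (Φ (5, i)) = H.dist (Φ (5, i)) (FC B) :=
          SimpleGraph.dist_comm
        have hl := hlow6 i
        omega
    have hExc : ∀ (A : Finset (Fin k)) (t : Fin 5) (j : Fin k),
        FC A ≠ Φ (colmap t, j) := by
      intro A t j hEq
      by_cases h0 : (colmap t).val = 0
      · have hc : colmap t = 0 := Fin.ext h0
        rw [hc] at hEq
        have t1 : H.dist (Φ (5, j)) (FC A) ≤ 5 := by
          have h1 := hFCb A j; split_ifs at h1 <;> omega
        rw [hEq] at t1
        have t2 := hlow6 j
        have hcm : H.dist (Φ (5, j)) (Φ (0, j)) = H.dist (Φ (0, j)) (Φ (5, j)) :=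
          SimpleGraph.dist_comm
        omega
      · have hne1 := colmap_ne_one t
        have hlt6 : (colmap t).val < 6 := (colmap t).isLt
        have h2 : 2 ≤ (colmap t).val := by omega
        have t1 : H.dist (Φ (0, j)) (FC A) ≤ 2 := by
          have h1 := hFCa A j; split_ifs at h1 <;> omega
        rw [hEq] at t1
        have t2 := hlowS (colmap t) j h2
        omega
    have hΨinj : Function.Injective
        (Sum.elim FC (fun p : Fin 5 × Fin k => Φ (colmap p.1, p.2))) := by
      intro x y hxy
      rcases x with A | p
      · rcases y with B | q
        · simp only [Sum.elim_inl] at hxy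
          rw [hFCinj hxy]
        · simp only [Sum.elim_inl, Sum.elim_inr] at hxy
          exact absurd hxy (hExc A q.1 q.2)
      · rcases y with B | q
        · simp only [Sum.elim_inl, Sum.elim_inr] at hxy
          exact absurd hxy.symm (hExc B p.1 p.2)
        · simp only [Sum.elim_inr] at hxy
          have hpq := hΦinj hxy
          rw [Prod.ext_iff] at hpq
          exact congrArg Sum.inr (Prod.ext (colmap_inj hpq.1) hpq.2)
    have hcard := Fintype.card_le_of_injective _ hΨinj
    have hcardS : Fintype.card (Finset (Fin k) ⊕ Fin 5 × Fin k) = 2 ^ k + 5 * k := by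
      rw [Fintype.card_sum, Fintype.card_finset, Fintype.card_prod]
      simp
    rw [hcardS] at hcard
    have hpk : 1 ≤ 2 ^ k := Nat.one_le_two_pow
    omega

/-- For every `k ≥ 1` there is a cocomparability graph on `6k` vertices such that every
Helly graph containing it as an isometric subgraph has at least `2^k + 4k - 2` vertices. -/
theorem cocomparability_graph_exponential_injective_hull (k : ℕ) (hk : 0 < k) :
    ∃ G : SimpleGraph (Fin (6 * k)), G.Connected ∧ IsCocomparability G ∧
      ∀ (W : Type) [Fintype W] (H : SimpleGraph W) (φ : Fin (6 * k) → W),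
        Function.Injective φ →
        (∀ a b, G.Adj a b → H.Adj (φ a) (φ b)) →
        (∀ a b, G.dist a b = H.dist (φ a) (φ b)) →
        H.Connected → HellyGraph H →
        2 ^ k + 4 * k - 2 ≤ Fintype.card W := by
  rcases Nat.lt_or_ge k 2 with hk2 | hk2
  · have hk1 : k = 1 := by omega
    subst hk1
    refine ⟨⊤, ?_, ?_, ?_⟩
    · have hpre : (⊤ : SimpleGraph (Fin (6 * 1))).Preconnected := by
        intro u v
        by_cases h : u = v
        · rw [h]
        · exact ((top_adj u v).mpr h).reachable
      haveI : Nonempty (Fin (6 * 1)) := ⟨0⟩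
      exact ⟨hpre⟩
    · refine ⟨Fin.val, Fin.val_injective, fun x y z hxy hyz _ => Or.inl ?_⟩
      exact (top_adj x y).mpr (fun h => by rw [h] at hxy; exact lt_irrefl _ hxy)
    · intro W _ H φ hinj _ _ _ _
      have hc := Fintype.card_le_of_injective φ hinj
      rw [Fintype.card_fin] at hc
      omega
  · exact main_ge2 k hk2
end

section
/- For every integer k ≥ 3 there exists a bipartite graph G with exactly 2k vertices and with no induced cycle of length greater than 6, such that every Helly graph H having G as an isometric subgraph satisfies |V(H)| ≥ 2^k − 2. (Hence there are bipartite graphs whose injective hull has at least 2^{n/2} − 2 vertices, where n = |V(G)|.) -/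
open SimpleGraph

/-- A bipartite graph: the vertex set partitions into two independent sets. -/
def IsBipartiteGraph {V : Type*} (G : SimpleGraph V) : Prop :=
  ∃ A : Set V, (∀ a ∈ A, ∀ b ∈ A, ¬ G.Adj a b) ∧ ∀ a ∉ A, ∀ b ∉ A, ¬ G.Adj a b

/-- `G` contains the cycle `C_n` as an induced subgraph. -/
def HasInducedCycle {V : Type*} (G : SimpleGraph V) (n : ℕ) : Prop :=
  ∃ f : Fin n → V, Function.Injective f ∧
    ∀ i j, (cycleGraph n).Adj i j ↔ G.Adj (f i) (f j)

/-! ### Auxiliary constructions -/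

/-- The graph `K_{k,k}` minus a perfect matching: `x` with `x < k` is `a_x`,
`x = k + i` is `b_i`; `a_i ~ b_j` iff `i ≠ j`. -/
def crownG (k : ℕ) : SimpleGraph (Fin (2 * k)) where
  Adj x y := (((x : ℕ) < k) ↔ (k ≤ (y : ℕ))) ∧ (x : ℕ) % k ≠ (y : ℕ) % k
  symm := by
    refine ⟨fun x y h => ?_⟩
    exact ⟨by omega, fun hc => h.2 hc.symm⟩
  loopless := by
    refine ⟨fun x h => ?_⟩
    exact h.2 rfl

lemma crownG_adj {k : ℕ} {x y : Fin (2 * k)} :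
    (crownG k).Adj x y ↔ ((((x : ℕ) < k) ↔ (k ≤ (y : ℕ))) ∧ (x : ℕ) % k ≠ (y : ℕ) % k) :=
  Iff.rfl

lemma pick1 {k : ℕ} (hk : 3 ≤ k) (i j : ℕ) : ∃ m, m < k ∧ m ≠ i ∧ m ≠ j := by
  by_cases h0 : i = 0 ∨ j = 0
  · by_cases h1 : i = 1 ∨ j = 1
    · exact ⟨2, by omega, by omega, by omega⟩
    · exact ⟨1, by omega, by omega, by omega⟩
  · exact ⟨0, by omega, by omega, by omega⟩

lemma modcase {k x : ℕ} (hk : 0 < k) (hx : x < 2 * k) :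
    ∃ m, x % k = m ∧ ((x < k ∧ m = x) ∨ (k ≤ x ∧ m = x - k)) := by
  rcases Nat.lt_or_ge x k with h | h
  · exact ⟨x % k, rfl, Or.inl ⟨h, Nat.mod_eq_of_lt h⟩⟩
  · refine ⟨x % k, rfl, Or.inr ⟨h, ?_⟩⟩
    rw [Nat.mod_eq_sub_mod h, Nat.mod_eq_of_lt (by omega)]

lemma modk {k m : ℕ} (h : m < k) : (k + m) % k = m := by
  rw [Nat.add_mod_left]; exact Nat.mod_eq_of_lt h

/-- Splitting a distance in a connected graph. -/
lemma walk_split {W : Type*} {H : SimpleGraph W} (hc : H.Connected) :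
    ∀ {u v : W} (p : H.Walk u v) (s t : ℕ), p.length ≤ s + t →
      ∃ w, H.dist u w ≤ s ∧ H.dist v w ≤ t := by
  intro u v p
  induction p with
  | nil =>
    rename_i w
    intro s t _
    exact ⟨w, by rw [SimpleGraph.dist_self]; exact Nat.zero_le _,
      by rw [SimpleGraph.dist_self]; exact Nat.zero_le _⟩
  | @cons u x v h q ih =>
    intro s t hlen
    cases s with
    | zero =>
      refine ⟨u, by rw [SimpleGraph.dist_self], ?_⟩
      have h1 : H.dist v u = H.dist u v := H.dist_comm
      have h2 : H.dist u v ≤ (Walk.cons h q).length := H.dist_le _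
      omega
    | succ s =>
      obtain ⟨w, h1, h2⟩ := ih s t (by simp [Walk.length_cons] at hlen; omega)
      refine ⟨w, ?_, h2⟩
      have ht : H.dist u w ≤ H.dist u x + H.dist x w := hc.dist_triangle
      have ha : H.dist u x ≤ 1 := by
        rw [SimpleGraph.dist_eq_one_iff_adj.mpr h]
      omega

lemma dist_split {W : Type*} {H : SimpleGraph W} (hc : H.Connected) (u v : W) (s t : ℕ)
    (h : H.dist u v ≤ s + t) : ∃ w, H.dist u w ≤ s ∧ H.dist v w ≤ t := by
  obtain ⟨p, hp⟩ := hc.exists_walk_length_eq_dist u v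
  exact walk_split hc p s t (by omega)

lemma three_le_dist_aux {W : Type*} {H : SimpleGraph W} {x y : W} (hr : H.Reachable x y)
    (hne : x ≠ y) (hadj : ¬ H.Adj x y) (hcn : ∀ w, H.Adj x w → H.Adj w y → False) :
    3 ≤ H.dist x y := by
  obtain ⟨p, hp⟩ := hr.exists_walk_length_eq_dist
  rw [← hp]
  cases p with
  | nil => exact absurd rfl hne
  | cons h q =>
    cases q with
    | nil => exact absurd h hadj
    | cons h' q' =>
      cases q' with
      | nil => exact (hcn _ h h').elim
      | cons h'' q'' => simp only [Walk.length_cons]; omega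

/-- distance between `a_i` and `b_i` is at least 3 -/
lemma crownG_dist_ab_ge {k : ℕ} (hconn : (crownG k).Connected) {x y : Fin (2 * k)}
    (h : (x : ℕ) < k) (h2 : k ≤ (y : ℕ)) (h3 : (x : ℕ) % k = (y : ℕ) % k) :
    3 ≤ (crownG k).dist x y := by
  apply three_le_dist_aux (hconn.preconnected x y)
  · intro he; rw [he] at h; omega
  · intro ha; exact ha.2 h3
  · intro w h1 h2'
    have e1 := h1.1
    have e2 := h2'.1
    omega

/-- same side, both low: distance at most 2 -/
lemma crownG_dist_low {k : ℕ} (hk : 3 ≤ k) {x y : Fin (2 * k)}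
    (hx : (x : ℕ) < k) (hy : (y : ℕ) < k) : (crownG k).dist x y ≤ 2 := by
  obtain ⟨m, hm1, hm2, hm3⟩ := pick1 hk ((x : ℕ) % k) ((y : ℕ) % k)
  have h1 : (crownG k).Adj x ⟨k + m, by omega⟩ := by
    refine ⟨by simp; omega, ?_⟩
    simp only [modk hm1]
    omega
  have h2 : (crownG k).Adj ⟨k + m, by omega⟩ y := by
    refine ⟨by simp; omega, ?_⟩
    simp only [modk hm1]
    omega
  have := (crownG k).dist_le (Walk.cons h1 (Walk.cons h2 Walk.nil))
  simpa using this

lemma crownG_dist_high {k : ℕ} (hk : 3 ≤ k) {x y : Fin (2 * k)}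
    (hx : k ≤ (x : ℕ)) (hy : k ≤ (y : ℕ)) : (crownG k).dist x y ≤ 2 := by
  obtain ⟨m, hm1, hm2, hm3⟩ := pick1 hk ((x : ℕ) % k) ((y : ℕ) % k)
  have h1 : (crownG k).Adj x ⟨m, by omega⟩ := by
    refine ⟨by simp; omega, ?_⟩
    simp only [Fin.val_mk, Nat.mod_eq_of_lt hm1]
    omega
  have h2 : (crownG k).Adj ⟨m, by omega⟩ y := by
    refine ⟨by simp; omega, ?_⟩
    simp only [Fin.val_mk, Nat.mod_eq_of_lt hm1]
    omega
  have := (crownG k).dist_le (Walk.cons h1 (Walk.cons h2 Walk.nil))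
  simpa using this

/-- `a_i` to `b_i`: distance at most 3 -/
lemma crownG_dist_ab_le {k : ℕ} (hk : 3 ≤ k) {x y : Fin (2 * k)}
    (hx : (x : ℕ) < k) (hy : k ≤ (y : ℕ)) (h3 : (x : ℕ) % k = (y : ℕ) % k) :
    (crownG k).dist x y ≤ 3 := by
  obtain ⟨m, hm1, hm2, _⟩ := pick1 hk ((x : ℕ) % k) ((x : ℕ) % k)
  obtain ⟨l, hl1, hl2, hl3⟩ := pick1 hk ((x : ℕ) % k) m
  have h1 : (crownG k).Adj x ⟨k + m, by omega⟩ := by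
    refine ⟨by simp; omega, ?_⟩
    simp only [modk hm1]
    omega
  have h2 : (crownG k).Adj ⟨k + m, by omega⟩ ⟨l, by omega⟩ := by
    refine ⟨by simp; omega, ?_⟩
    simp only [modk hm1, Fin.val_mk, Nat.mod_eq_of_lt hl1]
    omega
  have h2' : (crownG k).Adj ⟨l, by omega⟩ y := by
    refine ⟨by simp; omega, ?_⟩
    simp only [Fin.val_mk, Nat.mod_eq_of_lt hl1]
    omega
  have := (crownG k).dist_le (Walk.cons h1 (Walk.cons h2 (Walk.cons h2' Walk.nil)))
  simpa using this

lemma crownG_reach {k : ℕ} (hk : 3 ≤ k) (x : Fin (2 * k)) :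
    (crownG k).Reachable ⟨0, by omega⟩ x := by
  have hx := x.isLt
  rcases Nat.lt_or_ge (x : ℕ) k with hs | hs
  · by_cases h0 : (x : ℕ) = 0
    · rw [show x = (⟨0, by omega⟩ : Fin (2 * k)) from Fin.ext h0]
    · obtain ⟨m, hm1, hm2, hm3⟩ := pick1 hk 0 ((x : ℕ))
      have h1 : (crownG k).Adj ⟨0, by omega⟩ ⟨k + m, by omega⟩ := by
        refine ⟨by simp; omega, ?_⟩
        simp only [modk hm1, Fin.val_mk, Nat.zero_mod]
        omega
      have h2 : (crownG k).Adj ⟨k + m, by omega⟩ x := by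
        refine ⟨by simp; omega, ?_⟩
        simp only [modk hm1, Nat.mod_eq_of_lt hs]
        omega
      exact (h1.reachable).trans h2.reachable
  · by_cases h0 : (x : ℕ) % k = 0
    · -- x = b_0 : walk a_0 ~ b_1 ~ a_2 ~ b_0
      have h1 : (crownG k).Adj ⟨0, by omega⟩ ⟨k + 1, by omega⟩ := by
        refine ⟨by simp; omega, ?_⟩
        simp only [modk (show 1 < k by omega), Fin.val_mk, Nat.zero_mod]
        omega
      have h2 : (crownG k).Adj ⟨k + 1, by omega⟩ ⟨2, by omega⟩ := by
        refine ⟨by simp; omega, ?_⟩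
        simp only [modk (show 1 < k by omega), Fin.val_mk, Nat.mod_eq_of_lt (show 2 < k by omega)]
        omega
      have h3 : (crownG k).Adj ⟨2, by omega⟩ x := by
        refine ⟨by simp; omega, ?_⟩
        simp only [Fin.val_mk, Nat.mod_eq_of_lt (show 2 < k by omega), h0]
        omega
      exact ((h1.reachable).trans h2.reachable).trans h3.reachable
    · have h1 : (crownG k).Adj ⟨0, by omega⟩ x := by
        refine ⟨by simp; omega, ?_⟩
        simp only [Fin.val_mk, Nat.zero_mod]
        omega
      exact h1.reachable

lemma crownG_connected {k : ℕ} (hk : 3 ≤ k) : (crownG k).Connected := by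
  haveI : Nonempty (Fin (2 * k)) := ⟨⟨0, by omega⟩⟩
  exact SimpleGraph.Connected.mk
    (fun x y => (crownG_reach hk x).symm.trans (crownG_reach hk y))

/-- radius functions indexed by boolean vectors -/
def crownRV (k : ℕ) (t : ℕ → Bool) (x : Fin (2 * k)) : ℕ :=
  if (decide ((x : ℕ) < k)) = t ((x : ℕ) % k) then 1 else 2

lemma crownRV_bounds {k : ℕ} (t : ℕ → Bool) (x : Fin (2 * k)) :
    1 ≤ crownRV k t x ∧ crownRV k t x ≤ 2 := by
  unfold crownRV; split <;> omega

lemma crownG_dist_le_rv {k : ℕ} (hk : 3 ≤ k) (t : ℕ → Bool) (x y : Fin (2 * k)) :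
    (crownG k).dist x y ≤ crownRV k t x + crownRV k t y := by
  have hbx := crownRV_bounds t x
  have hby := crownRV_bounds t y
  have hx := x.isLt
  have hy := y.isLt
  rcases Nat.lt_or_ge (x : ℕ) k with hsx | hsx <;> rcases Nat.lt_or_ge (y : ℕ) k with hsy | hsy
  · have := crownG_dist_low hk hsx hsy; omega
  · by_cases hm : (x : ℕ) % k = (y : ℕ) % k
    · have hd := crownG_dist_ab_le hk hsx hsy hm
      have hsum : crownRV k t x + crownRV k t y = 3 := by
        unfold crownRV
        rw [hm]
        have d1 : decide ((x : ℕ) < k) = true := by simpa using hsx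
        have d2 : decide ((y : ℕ) < k) = false := by simp; omega
        rw [d1, d2]
        cases t ((y : ℕ) % k) <;> simp
      omega
    · have hadj : (crownG k).Adj x y := ⟨by omega, hm⟩
      have := SimpleGraph.dist_eq_one_iff_adj.mpr hadj
      omega
  · by_cases hm : (x : ℕ) % k = (y : ℕ) % k
    · have hd := crownG_dist_ab_le hk hsy hsx hm.symm
      rw [SimpleGraph.dist_comm] at hd
      have hsum : crownRV k t x + crownRV k t y = 3 := by
        unfold crownRV
        rw [hm]
        have d1 : decide ((x : ℕ) < k) = false := by simp; omega
        have d2 : decide ((y : ℕ) < k) = true := by simpa using hsy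
        rw [d1, d2]
        cases t ((y : ℕ) % k) <;> simp
      omega
    · have hadj : (crownG k).Adj x y := ⟨by omega, hm⟩
      have := SimpleGraph.dist_eq_one_iff_adj.mpr hadj
      omega
  · have := crownG_dist_high hk hsx hsy; omega

/-- For every `k ≥ 3` there is a bipartite graph on `2k` vertices without induced cycles
longer than 6 such that every Helly graph containing it as an isometric subgraph has at
least `2^k - 2` vertices. -/
theorem bipartite_graph_exponential_injective_hull (k : ℕ) (hk : 3 ≤ k) :
    ∃ G : SimpleGraph (Fin (2 * k)), G.Connected ∧ IsBipartiteGraph G ∧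
      (∀ n : ℕ, 6 < n → ¬ HasInducedCycle G n) ∧
      ∀ (W : Type) [Fintype W] (H : SimpleGraph W) (φ : Fin (2 * k) → W),
        Function.Injective φ →
        (∀ a b, G.Adj a b → H.Adj (φ a) (φ b)) →
        (∀ a b, G.dist a b = H.dist (φ a) (φ b)) →
        H.Connected → HellyGraph H →
        2 ^ k - 2 ≤ Fintype.card W := by
  refine ⟨crownG k, crownG_connected hk, ?_, ?_, ?_⟩
  · -- bipartite
    refine ⟨{x : Fin (2 * k) | (x : ℕ) < k}, ?_, ?_⟩
    · intro a ha b hb hadj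
      simp only [Set.mem_setOf_eq] at ha hb
      have := hadj.1
      omega
    · intro a ha b hb hadj
      simp only [Set.mem_setOf_eq] at ha hb
      have := hadj.1
      omega
  · -- no long induced cycles
    intro n hn hcyc
    obtain ⟨f, hinj, hiff⟩ := hcyc
    have l0 : 0 < n := by omega
    have l1 : 1 < n := by omega
    have l2 : 2 < n := by omega
    have l3 : 3 < n := by omega
    have l4 : 4 < n := by omega
    have l5 : 5 < n := by omega
    have l6 : 6 < n := by omega
    -- consecutive vertices are cycle-adjacent
    have hc : ∀ (i j : ℕ) (hi : i < n) (hj : j < n), j = i + 1 →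
        (cycleGraph n).Adj ⟨i, hi⟩ ⟨j, hj⟩ := by
      intro i j hi hj hij
      rw [cycleGraph_adj']
      right
      rw [Fin.sub_def]
      simp only [Fin.val_mk]
      have : (n - i) + j = n + 1 := by omega
      rw [this, Nat.add_mod_left, Nat.mod_eq_of_lt (by omega)]
    -- vertex 1 is not cycle-adjacent to vertices 4 and 6
    have hnc : ∀ (j : ℕ) (hj : j < n), 3 ≤ j → j ≤ 6 →
        ¬ (cycleGraph n).Adj ⟨1, l1⟩ ⟨j, hj⟩ := by
      intro j hj h3 h6 hadj
      rw [cycleGraph_adj'] at hadj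
      rcases hadj with h | h
      · rw [Fin.sub_def] at h
        simp only [Fin.val_mk] at h
        rw [Nat.mod_eq_of_lt (by omega)] at h
        omega
      · rw [Fin.sub_def] at h
        simp only [Fin.val_mk] at h
        have : (n - 1) + j = n + (j - 1) := by omega
        rw [this, Nat.add_mod_left, Nat.mod_eq_of_lt (by omega)] at h
        omega
    -- the chain of graph adjacencies
    have a12 := (hiff _ _).mp (hc 1 2 l1 l2 rfl)
    have a23 := (hiff _ _).mp (hc 2 3 l2 l3 rfl)
    have a34 := (hiff _ _).mp (hc 3 4 l3 l4 rfl)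
    have a45 := (hiff _ _).mp (hc 4 5 l4 l5 rfl)
    have a56 := (hiff _ _).mp (hc 5 6 l5 l6 rfl)
    have s12 := a12.1
    have s23 := a23.1
    have s34 := a34.1
    have s45 := a45.1
    have s56 := a56.1
    have b1 := (f ⟨1, l1⟩).isLt
    have b2 := (f ⟨2, l2⟩).isLt
    have b3 := (f ⟨3, l3⟩).isLt
    have b4 := (f ⟨4, l4⟩).isLt
    have b5 := (f ⟨5, l5⟩).isLt
    have b6 := (f ⟨6, l6⟩).isLt
    obtain ⟨m1, e1, hm1⟩ := modcase (show 0 < k by omega) b1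
    obtain ⟨m4, e4, hm4⟩ := modcase (show 0 < k by omega) b4
    obtain ⟨m6, e6, hm6⟩ := modcase (show 0 < k by omega) b6
    have hne46 : ((f ⟨4, l4⟩ : Fin (2 * k)) : ℕ) ≠ ((f ⟨6, l6⟩ : Fin (2 * k)) : ℕ) := by
      intro hval
      have h46 := hinj (Fin.ext hval)
      simp only [Fin.mk.injEq] at h46
      omega
    by_cases hm14 : m1 = m4
    · have hadj : (crownG k).Adj (f ⟨1, l1⟩) (f ⟨6, l6⟩) := by
        refine ⟨by omega, ?_⟩
        rw [e1, e6]
        omega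
      exact hnc 6 l6 (by omega) (by omega) ((hiff _ _).mpr hadj)
    · have hadj : (crownG k).Adj (f ⟨1, l1⟩) (f ⟨4, l4⟩) := by
        refine ⟨by omega, ?_⟩
        rw [e1, e4]
        omega
      exact hnc 4 l4 (by omega) (by omega) ((hiff _ _).mpr hadj)
  · -- the Helly bound
    intro W _ H φ hφinj hφadj hφdist hHconn hHelly
    have hNE : Nonempty (Fin (2 * k)) := ⟨⟨0, by omega⟩⟩
    have key : ∀ t : ℕ → Bool, ∃ c : W, ∀ x : Fin (2 * k),
        H.dist (φ x) c ≤ crownRV k t x := by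
      intro t
      have hpair : ∀ u ∈ Set.range φ, ∀ v ∈ Set.range φ,
          ∃ w, H.dist u w ≤ crownRV k t (Function.invFun φ u) ∧
               H.dist v w ≤ crownRV k t (Function.invFun φ v) := by
        rintro u ⟨x, rfl⟩ v ⟨y, rfl⟩
        rw [Function.leftInverse_invFun hφinj x, Function.leftInverse_invFun hφinj y]
        apply dist_split hHconn
        rw [← hφdist]
        exact crownG_dist_le_rv hk t x y
      obtain ⟨c, hc⟩ := hHelly (Set.range φ) (fun w => crownRV k t (Function.invFun φ w)) hpair
      refine ⟨c, fun x => ?_⟩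
      have := hc (φ x) ⟨x, rfl⟩
      rwa [Function.leftInverse_invFun hφinj x] at this
    classical
    -- extension of a boolean vector on Fin k to ℕ
    let ext : (Fin k → Bool) → (ℕ → Bool) := fun t m => if h : m < k then t ⟨m, h⟩ else false
    let C : (Fin k → Bool) → W := fun t => (key (ext t)).choose
    have hC : ∀ t (x : Fin (2 * k)), H.dist (φ x) (C t) ≤ crownRV k (ext t) x :=
      fun t => (key (ext t)).choose_spec
    -- the two special vertices for index i
    have main : ∀ (t t' : Fin k → Bool) (i : Fin k), t i = true → t' i = false →
        C t ≠ C t' := by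
      intro t t' i hti hti' heq
      set a : Fin (2 * k) := ⟨(i : ℕ), by omega⟩ with ha
      set b : Fin (2 * k) := ⟨k + (i : ℕ), by omega⟩ with hb
      have hma : ((a : ℕ)) % k = (i : ℕ) := by
        simp only [ha, Fin.val_mk]
        exact Nat.mod_eq_of_lt i.isLt
      have hmb : ((b : ℕ)) % k = (i : ℕ) := by
        simp only [hb, Fin.val_mk]
        exact modk i.isLt
      have hexta : ext t ((a : ℕ) % k) = true := by
        rw [hma]
        simp only [ext, i.isLt, dif_pos]
        simpa using hti
      have hextb : ext t' ((b : ℕ) % k) = false := by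
        rw [hmb]
        simp only [ext, i.isLt, dif_pos]
        simpa using hti'
      have hrva : crownRV k (ext t) a = 1 := by
        unfold crownRV
        rw [hexta]
        have : decide ((a : ℕ) < k) = true := by simp only [ha, Fin.val_mk]; simpa using i.isLt
        rw [this]
        simp
      have hrvb : crownRV k (ext t') b = 1 := by
        unfold crownRV
        rw [hextb]
        have : decide ((b : ℕ) < k) = false := by simp only [hb, Fin.val_mk]; simp
        rw [this]
        simp
      have d1 : H.dist (φ a) (C t) ≤ 1 := by have := hC t a; omega
      have d2 : H.dist (φ b) (C t') ≤ 1 := by have := hC t' b; omega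
      rw [← heq] at d2
      have htri : H.dist (φ a) (φ b) ≤ H.dist (φ a) (C t) + H.dist (C t) (φ b) :=
        hHconn.dist_triangle
      have hcomm : H.dist (C t) (φ b) = H.dist (φ b) (C t) := H.dist_comm
      have hlow : 3 ≤ (crownG k).dist a b := by
        apply crownG_dist_ab_ge (crownG_connected hk)
        · simp only [ha, Fin.val_mk]; exact i.isLt
        · simp only [hb, Fin.val_mk]; omega
        · rw [hma, hmb]
      have := hφdist a b
      omega
    have Cinj : Function.Injective C := by
      intro t t' heq
      by_contra hne
      obtain ⟨i, hi⟩ := Function.ne_iff.mp hne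
      cases hti : t i with
      | true =>
        exact main t t' i hti (by cases h' : t' i with
          | true => rw [hti, h'] at hi; exact absurd rfl hi
          | false => rfl) heq
      | false =>
        refine main t' t i ?_ hti heq.symm
        cases h' : t' i with
        | true => rfl
        | false => rw [hti, h'] at hi; exact absurd rfl hi
    have hcard : 2 ^ k ≤ Fintype.card W := by
      have := Fintype.card_le_of_injective C Cinj
      simpa [Fintype.card_fun] using this
    omega
end
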